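/- arXiv:2409.14991 — 7 statements merged into one kernel-verified Lean document; each statement's English description precedes it below -/
import Mathlib

section
/- The local (classical) bound of the chain Bell expression I_{d,m} = Σ_{k=0}^{d-1} α_k Σ_{i=1}^m [p(A_i - B_i = k) + p(B_i - A_{i+1} = k)] over deterministic local assignments equals the maximum of Σ_{i=1}^{2m} α_{q_i} over all tuples (q_1,...,q_{2m}) ∈ ℤ_d^{2m} with q_1 + ... + q_{2m} ≡ -1 (mod d). -/
open scoped BigOperators

/-- The chain Bell value `I_{d,m}` of a behavior `p(a,b|x,y)` (inputs `0,...,m-1`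
standing for `1,...,m`), with the convention `A_{m+1} = A_1 + 1`:
`I = Σ_k α_k Σ_i [p(A_i - B_i = k) + p(B_i - A_{i+1} = k)]`, where
`p(A_x - B_y = k) = Σ_j p(j+k, j | x, y)` and the term for `i = m` uses inputs `(1,m)`
with shift `-k-1`. -/
noncomputable def chainValue (d m : ℕ) [NeZero d] [NeZero m] (α : ZMod d → ℝ)
    (p : Fin m → Fin m → ZMod d → ZMod d → ℝ) : ℝ :=
  ∑ k : ZMod d, α k * ∑ i : Fin m,
    ((∑ j : ZMod d, p i i (j + k) j) +
      (if i.val = m - 1 then ∑ j : ZMod d, p 0 i (j + (-k - 1)) j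
       else ∑ j : ZMod d, p (i + 1) i (j + (-k)) j))

section aux
variable {d : ℕ} [NeZero d] (α : ZMod d → ℝ)

lemma det_core (g : ZMod d → ZMod d) (u v k0 : ZMod d)
    (hg : ∀ k, v + g k = u ↔ k = k0) :
    ∑ k : ZMod d, α k * ∑ j : ZMod d,
      (if j + g k = u ∧ j = v then (1:ℝ) else 0) = α k0 := by
  have h : ∀ k : ZMod d,
      (∑ j : ZMod d, (if j + g k = u ∧ j = v then (1:ℝ) else 0))
        = if k = k0 then 1 else 0 := by
    intro k
    rw [Finset.sum_eq_single v]
    · simp [hg k]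
    · intro j _ hj; simp [hj]
    · simp
  simp only [h, mul_ite, mul_one, mul_zero]
  simp

lemma det1 (u v : ZMod d) :
    ∑ k : ZMod d, α k * ∑ j : ZMod d,
      (if j + k = u ∧ j = v then (1:ℝ) else 0) = α (u - v) :=
  det_core α (fun k => k) u v (u - v) (fun k => by
    constructor <;> intro h <;> linear_combination h)

lemma det2 (u v : ZMod d) :
    ∑ k : ZMod d, α k * ∑ j : ZMod d,
      (if j + (-k) = u ∧ j = v then (1:ℝ) else 0) = α (v - u) :=
  det_core α (fun k => -k) u v (v - u) (fun k => by
    constructor <;> intro h <;> linear_combination -h)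

lemma det3 (u v : ZMod d) :
    ∑ k : ZMod d, α k * ∑ j : ZMod d,
      (if j + (-k - 1) = u ∧ j = v then (1:ℝ) else 0) = α (v - u - 1) :=
  det_core α (fun k => -k - 1) u v (v - u - 1) (fun k => by
    constructor <;> intro h <;> linear_combination -h)

end aux

lemma chainValue_det (d m : ℕ) [NeZero d] [NeZero m] (α : ZMod d → ℝ)
    (a b : Fin m → ZMod d) :
    chainValue d m α (fun x y a' b' => if a' = a x ∧ b' = b y then (1:ℝ) else 0)
      = (∑ i : Fin m, α (a i - b i))
        + ∑ i : Fin m, (if i.val = m - 1 then α (b i - a 0 - 1) else α (b i - a (i+1))) := by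
  unfold chainValue
  simp only [Finset.mul_sum]
  rw [Finset.sum_comm, ← Finset.sum_add_distrib]
  refine Finset.sum_congr rfl fun i _ => ?_
  by_cases hc : i.val = m - 1
  · simp only [if_pos hc, mul_add]
    rw [Finset.sum_add_distrib, det1, det3]
  · simp only [if_neg hc, mul_add]
    rw [Finset.sum_add_distrib, det1, det2]

lemma sum_range_two_mul {M : Type*} [AddCommMonoid M] (f : ℕ → M) (m : ℕ) :
    ∑ n ∈ Finset.range (2*m), f n = ∑ n ∈ Finset.range m, (f (2*n) + f (2*n+1)) := by
  induction m with
  | zero => simp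
  | succ k ih =>
    rw [Nat.mul_succ, show 2*k+2 = (2*k+1)+1 from rfl, Finset.sum_range_succ,
      Finset.sum_range_succ, Finset.sum_range_succ, ih, add_assoc]

lemma split_sum {M : Type*} [AddCommMonoid M] (m : ℕ) (f : Fin (2*m) → M) :
    ∑ i, f i = (∑ i : Fin m, f ⟨2*i.val, by omega⟩) + ∑ i : Fin m, f ⟨2*i.val+1, by omega⟩ := by
  set g : ℕ → M := fun n => if h : n < 2*m then f ⟨n, h⟩ else 0 with hg
  have h1 : ∑ i, f i = ∑ n ∈ Finset.range (2*m), g n := by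
    rw [← Fin.sum_univ_eq_sum_range]
    exact Finset.sum_congr rfl fun i _ => by simp [hg, i.isLt]
  rw [h1, sum_range_two_mul, Finset.sum_add_distrib,
    ← Fin.sum_univ_eq_sum_range (fun n => g (2*n)) m,
    ← Fin.sum_univ_eq_sum_range (fun n => g (2*n+1)) m]
  congr 1
  · exact Finset.sum_congr rfl fun i _ => by
      have := i.isLt; simp only [hg]; rw [dif_pos (by omega)]
  · exact Finset.sum_congr rfl fun i _ => by
      have := i.isLt; simp only [hg]; rw [dif_pos (by omega)]

def il {γ : Type*} {m : ℕ} (f g : Fin m → γ) (i : Fin (2*m)) : γ :=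
  if i.val % 2 = 0 then f ⟨i.val/2, by have := i.isLt; omega⟩
  else g ⟨i.val/2, by have := i.isLt; omega⟩

lemma il_even {γ : Type*} {m : ℕ} (f g : Fin m → γ) (i : Fin m) (h : 2*i.val < 2*m) :
    il f g ⟨2*i.val, h⟩ = f i := by
  simp only [il]
  rw [if_pos (by omega)]
  congr 1
  apply Fin.ext
  show (2*i.val)/2 = i.val
  omega

lemma il_odd {γ : Type*} {m : ℕ} (f g : Fin m → γ) (i : Fin m) (h : 2*i.val+1 < 2*m) :
    il f g ⟨2*i.val+1, h⟩ = g i := by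
  simp only [il]
  rw [if_neg (by omega)]
  congr 1
  apply Fin.ext
  show (2*i.val+1)/2 = i.val
  omega

lemma sum_comp_il {γ : Type*} {M : Type*} [AddCommMonoid M] {m : ℕ}
    (φ : γ → M) (f g : Fin m → γ) :
    ∑ i : Fin (2*m), φ (il f g i) = (∑ i, φ (f i)) + ∑ i, φ (g i) := by
  rw [split_sum]
  congr 1
  · exact Finset.sum_congr rfl fun i _ => by rw [il_even]
  · exact Finset.sum_congr rfl fun i _ => by rw [il_odd]

lemma tele (d m : ℕ) [NeZero d] [NeZero m] (a b : Fin m → ZMod d) :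
    ((∑ i, (a i - b i)) +
      ∑ i : Fin m, (if i.val = m - 1 then b i - a 0 - 1 else b i - a (i+1))) = -1 := by
  have hm0 : 0 < m := Nat.pos_of_ne_zero (NeZero.ne m)
  have hlast : ∀ i : Fin m, i.val = m - 1 → i + 1 = 0 := by
    intro i h
    apply Fin.ext
    have hi := i.isLt
    simp only [Fin.add_def, Fin.val_one', Fin.val_zero]
    by_cases hm1 : m = 1
    · subst hm1; omega
    · have h1 : 1 % m = 1 := Nat.mod_eq_of_lt (by omega)
      rw [h, h1, Nat.sub_add_cancel (by omega), Nat.mod_self]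
  have step : ∀ i : Fin m,
      (if i.val = m - 1 then b i - a 0 - 1 else b i - a (i+1))
        = b i - a (i+1) - (if i.val = m - 1 then 1 else 0) := by
    intro i
    by_cases h : i.val = m - 1
    · rw [if_pos h, if_pos h, hlast i h]
    · rw [if_neg h, if_neg h, sub_zero]
  simp only [step]
  rw [← Finset.sum_add_distrib]
  have comb : ∀ i : Fin m,
      a i - b i + (b i - a (i+1) - (if i.val = m - 1 then (1:ZMod d) else 0))
        = a i - a (i+1) - (if i.val = m - 1 then (1:ZMod d) else 0) := fun i => by ring
  simp only [comb]
  rw [Finset.sum_sub_distrib, Finset.sum_sub_distrib]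
  have h2 : ∑ i : Fin m, a (i+1) = ∑ i, a i :=
    Fintype.sum_equiv (Equiv.addRight 1) _ _ (fun i => rfl)
  have h3 : (∑ i : Fin m, (if i.val = m - 1 then (1:ZMod d) else 0)) = 1 := by
    rw [Finset.sum_eq_single (⟨m-1, by omega⟩ : Fin m)]
    · simp
    · intro j _ hj
      rw [if_neg]
      intro hv
      exact hj (Fin.ext hv)
    · simp
  rw [h2, h3]
  ring

/-- The classical (local) bound of the chain inequality:
`max { Σ_{i=1}^{2m} α_{q_i} : q ∈ ℤ_d^{2m}, Σ_i q_i ≡ -1 (mod d) }`. -/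
noncomputable def classicalBound (d m : ℕ) [NeZero d] (α : ZMod d → ℝ) : ℝ :=
  sSup {S : ℝ | ∃ q : Fin (2 * m) → ZMod d, (∑ i, q i) = -1 ∧ S = ∑ i, α (q i)}

/-- the local bound of the chain Bell expression over deterministic local
assignments equals the maximum of `Σ α_{q_i}` over tuples with `Σ q_i ≡ -1 (mod d)`. -/
theorem chain_local_bound_eq
    (d m : ℕ) [NeZero d] [NeZero m] (hd : 2 ≤ d) (hm : 2 ≤ m) (α : ZMod d → ℝ) :
    sSup {I : ℝ | ∃ a b : Fin m → ZMod d,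
        I = chainValue d m α
          (fun x y a' b' => if a' = a x ∧ b' = b y then (1 : ℝ) else 0)} =
      classicalBound d m α := by
  have hset : {I : ℝ | ∃ a b : Fin m → ZMod d,
        I = chainValue d m α
          (fun x y a' b' => if a' = a x ∧ b' = b y then (1 : ℝ) else 0)}
      = {S : ℝ | ∃ q : Fin (2 * m) → ZMod d, (∑ i, q i) = -1 ∧ S = ∑ i, α (q i)} := by
    ext I
    simp only [Set.mem_setOf_eq]
    constructor
    · rintro ⟨a, b, rfl⟩
      refine ⟨il (fun i => a i - b i)
        (fun i => if i.val = m - 1 then b i - a 0 - 1 else b i - a (i+1)), ?_, ?_⟩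
      · rw [show (∑ i : Fin (2*m), il (fun i => a i - b i)
            (fun i => if i.val = m - 1 then b i - a 0 - 1 else b i - a (i+1)) i)
            = _ from sum_comp_il id _ _]
        exact tele d m a b
      · rw [chainValue_det, sum_comp_il α]
        congr 1
        exact Finset.sum_congr rfl fun i _ => (apply_ite α _ _ _).symm
    · rintro ⟨q, hq, rfl⟩
      set q' : ℕ → ZMod d := fun n => if h : n < 2*m then q ⟨n, h⟩ else 0 with hq'
      set T : ℕ → ZMod d := fun n => ∑ j ∈ Finset.range n, q' j with hT
      have hm0 : 0 < m := Nat.pos_of_ne_zero (NeZero.ne m)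
      have hq'eq : ∀ i : Fin (2*m), q' i.val = q i := by
        intro i
        simp only [hq']
        rw [dif_pos i.isLt]
      have hTfull : T (2*m) = -1 := by
        have hh : T (2*m) = ∑ n ∈ Finset.range (2*m), q' n := rfl
        rw [hh, ← Fin.sum_univ_eq_sum_range (fun n => q' n) (2*m), ← hq]
        exact Finset.sum_congr rfl fun i _ => hq'eq i
      refine ⟨fun i => -(T (2*i.val)), fun i => -(T (2*i.val+1)), ?_⟩
      rw [chainValue_det]
      have key1 : ∀ i : Fin m, -(T (2*i.val)) - (-(T (2*i.val+1))) = q' (2*i.val) := by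
        intro i
        rw [hT]
        simp only
        rw [Finset.sum_range_succ]
        ring
      have key2 : ∀ i : Fin m,
          (if i.val = m - 1 then -(T (2*i.val+1)) - (-(T (2*(0:Fin m).val))) - 1
           else -(T (2*i.val+1)) - (-(T (2*(i+1).val)))) = q' (2*i.val+1) := by
        intro i
        by_cases hc : i.val = m - 1
        · rw [if_pos hc]
          have h0 : T (2*(0:Fin m).val) = 0 := by simp [hT]
          have h2m : 2*m = (2*i.val+1)+1 := by omega
          have := hTfull
          rw [h2m, hT] at this
          simp only at this
          rw [Finset.sum_range_succ] at this
          rw [h0]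
          have : q' (2*i.val+1) = -1 - T (2*i.val+1) := by
            rw [hT]; linear_combination this
          rw [this]; ring
        · rw [if_neg hc]
          have hv : (i+1).val = i.val + 1 := by
            have := i.isLt
            simp only [Fin.add_def, Fin.val_one']
            have h1 : 1 % m = 1 := Nat.mod_eq_of_lt (by omega)
            rw [h1]
            exact Nat.mod_eq_of_lt (by omega)
          rw [hv, hT]
          simp only
          rw [show 2*(i.val+1) = (2*i.val+1)+1 by ring,
            Finset.sum_range_succ q' (2*i.val+1)]
          ring
      have key2' : ∀ i : Fin m,
          (if i.val = m - 1 then α (-(T (2*i.val+1)) - (-(T (2*(0:Fin m).val))) - 1)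
           else α (-(T (2*i.val+1)) - (-(T (2*(i+1).val))))) = α (q' (2*i.val+1)) :=
        fun i => by rw [← apply_ite α, key2 i]
      simp only [key1, key2']
      have lhs : ∑ i : Fin (2*m), α (q i) = ∑ n ∈ Finset.range (2*m), α (q' n) := by
        rw [← Fin.sum_univ_eq_sum_range (fun n => α (q' n)) (2*m)]
        exact Finset.sum_congr rfl fun i _ => by rw [hq'eq i]
      rw [lhs, sum_range_two_mul (fun n => α (q' n)) m, Finset.sum_add_distrib,
        ← Fin.sum_univ_eq_sum_range (fun n => α (q' (2*n))) m,
        ← Fin.sum_univ_eq_sum_range (fun n => α (q' (2*n+1))) m]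
  rw [hset]
  rfl
end

section
/- Modifying the previous no-signaling behavior so that measurement A_1 deterministically outputs e ∈ ℤ_d while Bob's marginals are unchanged — i.e. setting p(a,b|1,y) := δ_{a,e}·(1/d) for all y and keeping all other distributions — yields a behavior whose chain Bell value equals Σ_{i=2}^{2m-1} α_0 + (1/d)Σ_{q∈ℤ_d} α_q + (1/d)Σ_{q∈ℤ_d} α_q, and this value does not exceed the classical bound I_{d,m}^C = max{ Σ_{i=1}^{2m} α_{q_i} : Σ_i q_i ≡ -1 (mod d) }. -/
/-!
Of the 2m correlation terms of the chain, the 2m - 2 that do not involve A₁ are perfectly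
correlated and contribute α₀ each, while the two involving the deterministic A₁ see a uniform
outcome on Bob's side and contribute (1/d) Σ_q α_q each. Since c ↦ -1 - c permutes ℤ_d, the value
is the average over c of α_c + α_{-1-c} + (2m - 2) α₀, which is the value of the deterministic
strategy with q₁ = c, q_{2m} = -1 - c and all other qᵢ = 0, hence at most the classical bound.
-/

open scoped BigOperators

section Sums

variable {ι M : Type*} [AddCommMonoid M]

lemma Fintype.sum_ite_eq_const_else [Fintype ι] [DecidableEq ι] (a : ι) (x c : M) :
    ∑ i, (if i = a then x else c) = x + (Fintype.card ι - 1) • c := by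
  rw [Fintype.sum_eq_add_sum_compl a, if_pos rfl,
    Finset.sum_congr rfl fun i hi => if_neg (Finset.mem_compl.1 hi ∘ Finset.mem_singleton.2),
    Finset.sum_const, Finset.card_compl, Finset.card_singleton]

variable {G : Type*} [AddGroup G] [Fintype G] [DecidableEq G]

lemma Fintype.sum_ite_add_eq (k e : G) (c : M) : ∑ j : G, (if j + k = e then c else 0) = c := by
  simp [← eq_sub_iff_add_eq]

end Sums

section ClassicalBound

variable {d m : ℕ} [NeZero d] (α : ZMod d → ℝ)

lemma le_classicalBound {q : Fin (2 * m) → ZMod d} (hq : ∑ i, q i = -1) :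
    ∑ i, α (q i) ≤ classicalBound d m α := by
  refine le_csSup (Set.Finite.bddAbove ?_) ⟨q, hq, rfl⟩
  refine (Set.finite_range fun q : Fin (2 * m) → ZMod d => ∑ i, α (q i)).subset ?_
  rintro _ ⟨q, -, rfl⟩
  exact ⟨q, rfl⟩

lemma add_add_mul_le_classicalBound [NeZero m] (c : ZMod d) :
    α c + α (-1 - c) + ((2 * m - 2 : ℕ) : ℝ) * α 0 ≤ classicalBound d m α := by
  obtain ⟨n, hn⟩ : ∃ n, 2 * m = n + 2 := ⟨2 * m - 2, by have := NeZero.pos m; omega⟩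
  let q : Fin (n + 2) → ZMod d := Fin.cons c (Fin.snoc 0 (-1 - c))
  have hq : ∑ i, q (finCongr hn i) = -1 := by
    rw [Equiv.sum_comp (finCongr hn) q]
    simp [q, Fin.sum_cons, Fin.sum_snoc]
  convert le_classicalBound α hq using 1
  rw [Equiv.sum_comp (finCongr hn) fun i => α (q i)]
  rw [Fin.sum_univ_succ, Fin.sum_univ_castSucc]
  simp only [q, hn, add_tsub_cancel_right, Fin.cons_zero, Fin.cons_succ, Fin.snoc_castSucc,
    Pi.zero_apply, Finset.sum_const, Finset.card_univ, Fintype.card_fin, nsmul_eq_mul,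
    Fin.succ_last, Fin.cons_last, Fin.snoc_last]
  ring

end ClassicalBound

noncomputable def deterministicA1Behavior (d m : ℕ) [NeZero m] (e : ZMod d) :
    Fin m → Fin m → ZMod d → ZMod d → ℝ := fun x y a b =>
  if x = 0 then (if a = e then (1 : ℝ) / d else 0)
  else if x = y then (if a = b then (1 : ℝ) / d else 0)
  else if x.val = y.val + 1 then (if a = b then (1 : ℝ) / d else 0)
  else 1 / (d ^ 2 : ℝ)

section DeterministicA1

variable (d m : ℕ) [NeZero d] [NeZero m] (e : ZMod d)

lemma sum_deterministicA1Behavior_self (i : Fin m) (k : ZMod d) :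
    ∑ j, deterministicA1Behavior d m e i i (j + k) j =
      if i = 0 then (1 : ℝ) / d else if k = 0 then 1 else 0 := by
  by_cases hi : i = 0
  · simp [deterministicA1Behavior, hi, Fintype.sum_ite_add_eq]
  · simp [deterministicA1Behavior, hi]

lemma sum_deterministicA1Behavior_succ (i : Fin m) (k : ZMod d) :
    (if i.val = m - 1 then ∑ j, deterministicA1Behavior d m e 0 i (j + (-k - 1)) j
      else ∑ j, deterministicA1Behavior d m e (i + 1) i (j + -k) j) =
      if i = Fin.rev 0 then (1 : ℝ) / d else if k = 0 then 1 else 0 := by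
  have hlast : i.val = m - 1 ↔ i = Fin.rev 0 := by simp [Fin.ext_iff, Fin.val_rev]
  by_cases hi : i = Fin.rev 0
  · simp [deterministicA1Behavior, hi, Fintype.sum_ite_add_eq]
  · have hsucc : (i + 1).val = i.val + 1 :=
      Fin.val_add_one_of_lt' (by have := mt hlast.1 hi; omega)
    have hne0 : i + 1 ≠ 0 := fun h => by rw [h, Fin.val_zero] at hsucc; omega
    have hne : i + 1 ≠ i := fun h => by rw [h] at hsucc; omega
    simp [deterministicA1Behavior, hlast, hi, hne0, hne, hsucc]

lemma chainValue_deterministicA1Behavior (α : ZMod d → ℝ) :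
    chainValue d m α (deterministicA1Behavior d m e) =
      ((2 * m - 2 : ℕ) : ℝ) * α 0 + (1 / d) * (∑ q, α q) + (1 / d) * (∑ q, α q) := by
  have hpairs : ((m - 1) + (m - 1) : ℕ) = 2 * m - 2 := by omega
  simp only [chainValue, sum_deterministicA1Behavior_self, sum_deterministicA1Behavior_succ,
    Finset.sum_add_distrib, Fintype.sum_ite_eq_const_else, Fintype.card_fin]
  simp only [mul_add, Finset.sum_add_distrib, ← Finset.sum_mul, nsmul_eq_mul, mul_ite]
  simp only [mul_one, mul_zero, Finset.sum_ite_eq', Finset.mem_univ, if_true, ← hpairs,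
    Nat.cast_add]
  ring

lemma chainValue_deterministicA1Behavior_le_classicalBound (α : ZMod d → ℝ) :
    chainValue d m α (deterministicA1Behavior d m e) ≤ classicalBound d m α := by
  rw [chainValue_deterministicA1Behavior]
  have hd : (0 : ℝ) < d := by have := NeZero.pos d; positivity
  have hreflect : ∑ c, α (-1 - c) = ∑ c, α c := Equiv.sum_comp (Equiv.subLeft (-1)) α
  have hsum := Finset.sum_le_card_nsmul Finset.univ _ _
    fun c (_ : c ∈ Finset.univ) => add_add_mul_le_classicalBound (m := m) α c
  simp only [Finset.sum_add_distrib, hreflect, Finset.sum_const, Finset.card_univ, ZMod.card,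
    nsmul_eq_mul] at hsum
  rw [← mul_le_mul_iff_of_pos_left hd]
  field_simp
  linarith

end DeterministicA1

theorem chain_construction_deterministic_A1_general
    (d m : ℕ) [NeZero d] [NeZero m]
    (α : ZMod d → ℝ) (e : ZMod d)
    (p : Fin m → Fin m → ZMod d → ZMod d → ℝ)
    (hp : p = fun x y a b =>
      if x = 0 then (if a = e then (1 : ℝ) / d else 0)
      else if x = y then (if a = b then (1 : ℝ) / d else 0)
      else if x.val = y.val + 1 then (if a = b then (1 : ℝ) / d else 0)
      else 1 / (d ^ 2 : ℝ)) :
    chainValue d m α p =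
        ((2 * m - 2 : ℕ) : ℝ) * α 0 +
          (1 / d) * (∑ q : ZMod d, α q) + (1 / d) * (∑ q : ZMod d, α q) ∧
      chainValue d m α p ≤ classicalBound d m α := by
  subst hp
  exact ⟨chainValue_deterministicA1Behavior d m e α,
    chainValue_deterministicA1Behavior_le_classicalBound d m e α⟩

/-- making measurement `A_1` deterministically output `e` while keeping
Bob's marginals yields a behavior whose chain Bell value is
`(2m-2)·α_0 + (1/d)Σ_q α_q + (1/d)Σ_q α_q`, which does not exceed the classical bound. -/
theorem chain_construction_deterministic_A1
    (d m : ℕ) [NeZero d] [NeZero m] (hd : 2 ≤ d) (hm : 2 ≤ m)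
    (α : ZMod d → ℝ) (e : ZMod d)
    (p : Fin m → Fin m → ZMod d → ZMod d → ℝ)
    (hp : p = fun x y a b =>
      if x = 0 then (if a = e then (1 : ℝ) / d else 0)
      else if x = y then (if a = b then (1 : ℝ) / d else 0)
      else if x.val = y.val + 1 then (if a = b then (1 : ℝ) / d else 0)
      else 1 / (d ^ 2 : ℝ)) :
    chainValue d m α p =
        ((2 * m - 2 : ℕ) : ℝ) * α 0 +
          (1 / d) * (∑ q : ZMod d, α q) + (1 / d) * (∑ q : ZMod d, α q) ∧
      chainValue d m α p ≤ classicalBound d m α :=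
  chain_construction_deterministic_A1_general d m α e p hp
end

section
/- Suppose Alice's measurements {M_{a|x}} have a compatibility structure containing the star graph K_{1,m-1}(x*) (measurement x* is pairwise compatible with every other measurement), and ρ_AB is a bipartite state. Define the observed assemblage σ^obs_{a|x} := Tr_A[(M_{a|x} ⊗ 𝕀)ρ_AB]. Then for each edge (x*, x) there exist positive semidefinite operators τ^x_μ (indexed by deterministic response functions μ: {x*,x} → ℤ_d) on Bob's space, with Σ_μ Tr(τ^x_μ) = 1, such that σ^obs_{a|z} = Σ_μ δ_{a,μ(z)} τ^x_μ for z ∈ {x*, x}; i.e. the assemblage is K_{1,m-1}(x*)-partially-unsteerable. -/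
/-!
The parent POVM `G` of an edge `(x*, x)` and its two post-processings `p(·|x*, λ)`,
`p(·|x, λ)` combine into the joint POVM `𝒢_μ = Σ_λ p(μ(x*)|x*, λ) p(μ(x)|x, λ) G_λ`
(`μ false` and `μ true` are the outcomes of `x*` and `x`), whose marginals are `M_{x*}` and
`M_x` because each post-processing sums to one. Steering Bob with it gives
`τ_μ = Tr_A[(𝒢_μ ⊗ 𝕀)ρ]`: these are positive since `Tr_A[(CᴴC ⊗ 𝕀)ρ] = Tr_A[(C ⊗ 𝕀)ρ(C ⊗ 𝕀)ᴴ]`,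
and the marginal and normalisation conditions pass through the linear map `Tr_A[(· ⊗ 𝕀)ρ]`.
-/

open scoped BigOperators ComplexOrder

/-- Bob's conditional (unnormalized) state `Tr_A[(M ⊗ 𝕀)ρ]` for a measurement operator
`M` on Alice's space and a bipartite state `ρ`. -/
noncomputable def assemblageOf {nA nB : ℕ} (M : Matrix (Fin nA) (Fin nA) ℂ)
    (ρ : Matrix (Fin nA × Fin nB) (Fin nA × Fin nB) ℂ) : Matrix (Fin nB) (Fin nB) ℂ :=
  Matrix.of fun b b' => ∑ i : Fin nA, ∑ j : Fin nA, M i j * ρ (j, b) (i, b')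

open Matrix Kronecker

namespace Matrix

variable {α β R : Type*} [Fintype α]

def partialTraceLeft [AddCommMonoid R] (X : Matrix (α × β) (α × β) R) : Matrix β β R :=
  ∑ i, X.submatrix (Prod.mk i) (Prod.mk i)

@[simp]
lemma partialTraceLeft_apply [AddCommMonoid R] (X : Matrix (α × β) (α × β) R) (b b' : β) :
    partialTraceLeft X b b' = ∑ i, X (i, b) (i, b') := by
  simp [partialTraceLeft, sum_apply]

lemma trace_partialTraceLeft [AddCommMonoid R] [Fintype β] (X : Matrix (α × β) (α × β) R) :
    (partialTraceLeft X).trace = X.trace := by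
  simp only [trace, diag, partialTraceLeft_apply, Fintype.sum_prod_type]
  exact Finset.sum_comm

lemma PosSemidef.partialTraceLeft [Ring R] [PartialOrder R] [StarRing R] [AddLeftMono R]
    {X : Matrix (α × β) (α × β) R} (hX : X.PosSemidef) : X.partialTraceLeft.PosSemidef :=
  posSemidef_sum _ fun i _ => hX.submatrix (Prod.mk i)

lemma partialTraceLeft_kronecker_one_mul [CommSemiring R] [Fintype β] [DecidableEq β]
    (A : Matrix α α R) (X : Matrix (α × β) (α × β) R) :
    partialTraceLeft ((A ⊗ₖ 1) * X) = partialTraceLeft (X * (A ⊗ₖ 1)) := by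
  ext b b'
  simp only [partialTraceLeft_apply, mul_apply, Fintype.sum_prod_type, kroneckerMap_apply,
    one_apply, mul_ite, mul_one, mul_zero, ite_mul, zero_mul, Finset.sum_ite_eq,
    Finset.sum_ite_eq', Finset.mem_univ, if_true]
  rw [Finset.sum_comm]
  exact Finset.sum_congr rfl fun _ _ => Finset.sum_congr rfl fun _ _ => mul_comm _ _

end Matrix

lemma Fintype.sum_boolArrow {α M : Type*} [Fintype α] [AddCommMonoid M] (F : α → α → M) :
    ∑ μ : Bool → α, F (μ false) (μ true) = ∑ u, ∑ v, F u v := by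
  rw [← (Equiv.boolArrowEquivProd α).symm.sum_comp, Fintype.sum_prod_type]
  rfl

def jointCoarseGraining {ι α R E : Type*} [Fintype ι] [CommSemiring R] [AddCommMonoid E]
    [Module R E] (G : ι → E) (p q : α → ι → R) (μ : Bool → α) : E :=
  ∑ l, (p (μ false) l * q (μ true) l) • G l

section JointCoarseGraining

variable {ι α R E : Type*} [Fintype ι] [Fintype α] [DecidableEq α] [CommSemiring R]
  [AddCommMonoid E] [Module R E] (G : ι → E) {p q : α → ι → R}

lemma sum_ite_jointCoarseGraining_false (hq : ∀ l, ∑ b, q b l = 1) (a : α) :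
    ∑ μ : Bool → α, (if μ false = a then jointCoarseGraining G p q μ else 0) =
      ∑ l, p a l • G l := by
  simp only [jointCoarseGraining]
  rw [Fintype.sum_boolArrow (fun u v => if u = a then ∑ l, (p u l * q v l) • G l else 0),
    Finset.sum_comm]
  simp only [Finset.sum_ite_eq', Finset.mem_univ, if_true]
  rw [Finset.sum_comm]
  simp only [mul_comm (p a _), ← Finset.sum_smul, ← Finset.sum_mul, hq, one_mul]

lemma sum_ite_jointCoarseGraining_true (hp : ∀ l, ∑ a, p a l = 1) (b : α) :
    ∑ μ : Bool → α, (if μ true = b then jointCoarseGraining G p q μ else 0) =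
      ∑ l, q b l • G l := by
  simp only [jointCoarseGraining]
  rw [Fintype.sum_boolArrow (fun u v => if v = b then ∑ l, (p u l * q v l) • G l else 0)]
  simp only [Finset.sum_ite_eq', Finset.mem_univ, if_true]
  rw [Finset.sum_comm]
  simp only [← Finset.sum_smul, ← Finset.sum_mul, hp, one_mul]

lemma sum_jointCoarseGraining (hp : ∀ l, ∑ a, p a l = 1) (hq : ∀ l, ∑ b, q b l = 1) :
    ∑ μ, jointCoarseGraining G p q μ = ∑ l, G l := by
  calc ∑ μ, jointCoarseGraining G p q μ
      = ∑ a, ∑ μ : Bool → α, (if μ false = a then jointCoarseGraining G p q μ else 0) := by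
        rw [Finset.sum_comm]
        simp only [Finset.sum_ite_eq, Finset.mem_univ, if_true]
    _ = ∑ l, G l := by
        simp only [sum_ite_jointCoarseGraining_false G hq]
        rw [Finset.sum_comm]
        simp only [← Finset.sum_smul, hp, one_smul]

end JointCoarseGraining

lemma Matrix.PosSemidef.jointCoarseGraining {ι α n R : Type*} [Fintype ι]
    [CommRing R] [PartialOrder R] [StarRing R] [StarOrderedRing R] [IsOrderedRing R]
    {G : ι → Matrix n n R} {p q : α → ι → R} (hG : ∀ l, (G l).PosSemidef)
    (hp : ∀ a l, 0 ≤ p a l) (hq : ∀ b l, 0 ≤ q b l) (μ : Bool → α) :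
    (jointCoarseGraining G p q μ).PosSemidef :=
  posSemidef_sum _ fun l _ => (hG l).smul (mul_nonneg (hp _ l) (hq _ l))

section Assemblage

variable {nA nB : ℕ}

lemma assemblageOf_eq_partialTraceLeft (M : Matrix (Fin nA) (Fin nA) ℂ)
    (ρ : Matrix (Fin nA × Fin nB) (Fin nA × Fin nB) ℂ) :
    assemblageOf M ρ = partialTraceLeft ((M ⊗ₖ 1) * ρ) := by
  ext b b'
  simp only [assemblageOf, of_apply, partialTraceLeft_apply, mul_apply, Fintype.sum_prod_type,
    kroneckerMap_apply, one_apply, mul_ite, mul_one, mul_zero, ite_mul, zero_mul,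
    Finset.sum_ite_eq, Finset.mem_univ, if_true]

lemma assemblageOf_add (M N : Matrix (Fin nA) (Fin nA) ℂ)
    (ρ : Matrix (Fin nA × Fin nB) (Fin nA × Fin nB) ℂ) :
    assemblageOf (M + N) ρ = assemblageOf M ρ + assemblageOf N ρ := by
  ext b b'
  simp only [assemblageOf, of_apply, Matrix.add_apply, add_mul, Finset.sum_add_distrib]

lemma assemblageOf_zero (ρ : Matrix (Fin nA × Fin nB) (Fin nA × Fin nB) ℂ) :
    assemblageOf 0 ρ = 0 := by
  ext; simp [assemblageOf]

lemma assemblageOf_sum {κ : Type*} (s : Finset κ) (M : κ → Matrix (Fin nA) (Fin nA) ℂ)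
    (ρ : Matrix (Fin nA × Fin nB) (Fin nA × Fin nB) ℂ) :
    assemblageOf (∑ k ∈ s, M k) ρ = ∑ k ∈ s, assemblageOf (M k) ρ :=
  map_sum (AddMonoidHom.mk' (assemblageOf · ρ) fun M N => assemblageOf_add M N ρ) M s

lemma assemblageOf_sum_ite {κ : Type*} [Fintype κ] (P : κ → Prop) [DecidablePred P]
    (M : κ → Matrix (Fin nA) (Fin nA) ℂ) (ρ : Matrix (Fin nA × Fin nB) (Fin nA × Fin nB) ℂ) :
    assemblageOf (∑ k, if P k then M k else 0) ρ =
      ∑ k, if P k then assemblageOf (M k) ρ else 0 := by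
  simp only [assemblageOf_sum, apply_ite (assemblageOf · ρ), assemblageOf_zero]

lemma trace_assemblageOf_one (ρ : Matrix (Fin nA × Fin nB) (Fin nA × Fin nB) ℂ) :
    (assemblageOf 1 ρ).trace = ρ.trace := by
  rw [assemblageOf_eq_partialTraceLeft, one_kronecker_one, one_mul, trace_partialTraceLeft]

open scoped MatrixOrder in
lemma Matrix.PosSemidef.assemblageOf {G : Matrix (Fin nA) (Fin nA) ℂ}
    {ρ : Matrix (Fin nA × Fin nB) (Fin nA × Fin nB) ℂ} (hG : G.PosSemidef) (hρ : ρ.PosSemidef) :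
    (assemblageOf G ρ).PosSemidef := by
  obtain ⟨C, rfl⟩ : ∃ C : Matrix (Fin nA) (Fin nA) ℂ, G = star C * C :=
    CStarAlgebra.nonneg_iff_eq_star_mul_self.mp hG.nonneg
  have hC : (star C * C) ⊗ₖ (1 : Matrix (Fin nB) (Fin nB) ℂ) = (Cᴴ ⊗ₖ 1) * (C ⊗ₖ 1) := by
    rw [← mul_kronecker_mul, Matrix.one_mul, star_eq_conjTranspose]
  have hCconj : Cᴴ ⊗ₖ (1 : Matrix (Fin nB) (Fin nB) ℂ) = (C ⊗ₖ 1)ᴴ := by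
    rw [conjTranspose_kronecker, conjTranspose_one]
  rw [assemblageOf_eq_partialTraceLeft, hC, Matrix.mul_assoc, partialTraceLeft_kronecker_one_mul,
    hCconj]
  exact (hρ.mul_mul_conjTranspose_same _).partialTraceLeft

end Assemblage

theorem star_compatible_assemblage_partially_unsteerable_general
    (d m nA nB : ℕ) [NeZero d]
    (M : Fin m → ZMod d → Matrix (Fin nA) (Fin nA) ℂ)
    (ρ : Matrix (Fin nA × Fin nB) (Fin nA × Fin nB) ℂ)
    (hρ : ρ.PosSemidef) (hρtr : ρ.trace = 1)
    (xs : Fin m)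
    (hcomp : ∀ x, x ≠ xs → ∃ (L : ℕ) (G : Fin L → Matrix (Fin nA) (Fin nA) ℂ)
        (pr : Fin m → ZMod d → Fin L → ℝ),
      (∀ lam, (G lam).PosSemidef) ∧ (∑ lam, G lam = 1) ∧
      (∀ z a lam, 0 ≤ pr z a lam) ∧ (∀ z lam, ∑ a : ZMod d, pr z a lam = 1) ∧
      (∀ a, M xs a = ∑ lam, (pr xs a lam : ℂ) • G lam) ∧
      (∀ a, M x a = ∑ lam, (pr x a lam : ℂ) • G lam)) :
    ∀ x, x ≠ xs → ∃ τ : (Bool → ZMod d) → Matrix (Fin nB) (Fin nB) ℂ,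
      (∀ μ, (τ μ).PosSemidef) ∧
      (∑ μ : Bool → ZMod d, (τ μ).trace = 1) ∧
      (∀ a, assemblageOf (M xs a) ρ = ∑ μ : Bool → ZMod d, if μ false = a then τ μ else 0) ∧
      (∀ a, assemblageOf (M x a) ρ = ∑ μ : Bool → ZMod d, if μ true = a then τ μ else 0) := by
  intro x hx
  obtain ⟨L, G, pr, hG, hGsum, hpr, hprsum, hMxs, hMx⟩ := hcomp x hx
  have hpr_nonneg (z : Fin m) (a : ZMod d) (l : Fin L) : 0 ≤ (pr z a l : ℂ) :=
    Complex.zero_le_real.mpr (hpr z a l)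
  have hpr_sum (z : Fin m) (l : Fin L) : ∑ a, (pr z a l : ℂ) = 1 := by
    exact_mod_cast hprsum z l
  refine ⟨fun μ => assemblageOf
      (jointCoarseGraining G (fun a l => (pr xs a l : ℂ)) (fun b l => (pr x b l : ℂ)) μ) ρ,
    fun μ => ?_, ?_, fun a => ?_, fun a => ?_⟩
  · exact (PosSemidef.jointCoarseGraining hG (hpr_nonneg xs) (hpr_nonneg x) μ).assemblageOf hρ
  · rw [← trace_sum, ← assemblageOf_sum, sum_jointCoarseGraining G (hpr_sum xs) (hpr_sum x),
      hGsum, trace_assemblageOf_one, hρtr]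
  · rw [hMxs a, ← sum_ite_jointCoarseGraining_false G (p := fun a l => (pr xs a l : ℂ))
      (hpr_sum x), assemblageOf_sum_ite]
  · rw [hMx a, ← sum_ite_jointCoarseGraining_true G (q := fun b l => (pr x b l : ℂ))
      (hpr_sum xs), assemblageOf_sum_ite]

/-- if Alice's measurements have a compatibility structure containing the
star `K_{1,m-1}(x*)`, then for any state `ρ_AB` the observed assemblage
`σ^obs_{a|x} = Tr_A[(M_{a|x} ⊗ 𝕀)ρ]` is `K_{1,m-1}(x*)`-partially-unsteerable: for each
edge `(x*, x)` there are `τ^x_μ ⪰ 0` (indexed by deterministic responses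
`μ : Bool → ZMod d`, `false ↦ x*`, `true ↦ x`) with total trace 1 such that
`σ^obs_{a|z} = Σ_μ δ_{a,μ(z)} τ^x_μ` for `z ∈ {x*, x}`. -/
theorem star_compatible_assemblage_partially_unsteerable
    (d m nA nB : ℕ) [NeZero d] (hd : 2 ≤ d) (hm : 2 ≤ m)
    (M : Fin m → ZMod d → Matrix (Fin nA) (Fin nA) ℂ)
    (hpsd : ∀ x a, (M x a).PosSemidef)
    (hsum : ∀ x, ∑ a : ZMod d, M x a = 1)
    (ρ : Matrix (Fin nA × Fin nB) (Fin nA × Fin nB) ℂ)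
    (hρ : ρ.PosSemidef) (hρtr : ρ.trace = 1)
    (xs : Fin m)
    (hcomp : ∀ x, x ≠ xs → ∃ (L : ℕ) (G : Fin L → Matrix (Fin nA) (Fin nA) ℂ)
        (pr : Fin m → ZMod d → Fin L → ℝ),
      (∀ lam, (G lam).PosSemidef) ∧ (∑ lam, G lam = 1) ∧
      (∀ z a lam, 0 ≤ pr z a lam) ∧ (∀ z lam, ∑ a : ZMod d, pr z a lam = 1) ∧
      (∀ a, M xs a = ∑ lam, (pr xs a lam : ℂ) • G lam) ∧
      (∀ a, M x a = ∑ lam, (pr x a lam : ℂ) • G lam)) :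
    ∀ x, x ≠ xs → ∃ τ : (Bool → ZMod d) → Matrix (Fin nB) (Fin nB) ℂ,
      (∀ μ, (τ μ).PosSemidef) ∧
      (∑ μ : Bool → ZMod d, (τ μ).trace = 1) ∧
      (∀ a, assemblageOf (M xs a) ρ = ∑ μ : Bool → ZMod d, if μ false = a then τ μ else 0) ∧
      (∀ a, assemblageOf (M x a) ρ = ∑ μ : Bool → ZMod d, if μ true = a then τ μ else 0) :=
  star_compatible_assemblage_partially_unsteerable_general d m nA nB M ρ hρ hρtr xs hcomp
end

section
/- Let {σ^obs_{a|x}} be a K_{1,m-1}(x*)-partially-unsteerable assemblage, i.e. for each x ≠ x* there are operators τ^x_μ ⪰ 0 (μ: {x*,x} → ℤ_d deterministic) with σ^obs_{a|z} = Σ_μ δ_{a,μ(z)} τ^x_μ for z ∈ {x*,x}. Define for each e ∈ ℤ_d and each x the operators ξ^e_{a|x} := Σ_{μ: μ(x*) = e} δ_{a,μ(x)} τ^x_μ (with ξ^e_{a|x*} := δ_{a,e} σ^obs_{e|x*}). Then: (i) Σ_e ξ^e_{a|x} = σ^obs_{a|x} for all a,x; (ii) Σ_a ξ^e_{a|x}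 = Σ_a ξ^e_{a|x'} for all e, x, x' (no-signaling); (iii) ξ^e_{a|x} ⪰ 0; and (iv) Σ_e Tr(ξ^e_{a=e|x*}) = 1. Hence the steering-based guessing probability for input x* equals 1. -/
open scoped BigOperators ComplexOrder

/-- from a `K_{1,m-1}(x*)`-partially-unsteerable assemblage one can build
an explicit decomposition `ξ^e_{a|x}` (Eve's strategy) that (i) reproduces the observed
assemblage, (ii) is no-signaling, (iii) consists of positive semidefinite operators, and
(iv) guesses the outcome of `x*` perfectly, so the steering-based guessing probability
for `x*` equals 1. -/
theorem partially_unsteerable_perfect_guess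
    (d m n : ℕ) [NeZero d] [NeZero m] (hd : 2 ≤ d) (hm : 2 ≤ m)
    (σ : ZMod d → Fin m → Matrix (Fin n) (Fin n) ℂ)
    (hσpsd : ∀ a x, (σ a x).PosSemidef)
    (hσns : ∀ x x', ∑ a : ZMod d, σ a x = ∑ a : ZMod d, σ a x')
    (hσtr : ∀ x, (∑ a : ZMod d, σ a x).trace = 1)
    (xs : Fin m)
    (τ : Fin m → (Bool → ZMod d) → Matrix (Fin n) (Fin n) ℂ)
    (hτpsd : ∀ x, x ≠ xs → ∀ μ, (τ x μ).PosSemidef)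
    (hτ1 : ∀ x, x ≠ xs → ∀ a,
      σ a xs = ∑ μ : Bool → ZMod d, if μ false = a then τ x μ else 0)
    (hτ2 : ∀ x, x ≠ xs → ∀ a,
      σ a x = ∑ μ : Bool → ZMod d, if μ true = a then τ x μ else 0)
    (ξ : ZMod d → ZMod d → Fin m → Matrix (Fin n) (Fin n) ℂ)
    (hξ : ξ = fun e a x =>
      if x = xs then (if a = e then σ e xs else 0)
      else ∑ μ : Bool → ZMod d, if μ false = e ∧ μ true = a then τ x μ else 0) :
    (∀ a x, ∑ e : ZMod d, ξ e a x = σ a x) ∧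
    (∀ e x x', ∑ a : ZMod d, ξ e a x = ∑ a : ZMod d, ξ e a x') ∧
    (∀ e a x, (ξ e a x).PosSemidef) ∧
    (∑ e : ZMod d, (ξ e e xs).trace = 1) := by
  subst hξ
  -- key lemma for no-signaling: each marginal equals σ e xs
  have key : ∀ e x, (∑ a : ZMod d,
      (fun e a (x : Fin m) =>
        if x = xs then (if a = e then σ e xs else 0)
        else ∑ μ : Bool → ZMod d, if μ false = e ∧ μ true = a then τ x μ else 0) e a x)
      = σ e xs := by
    intro e x
    by_cases hx : x = xs
    · simp [hx]
    · simp only [if_neg hx]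
      rw [Finset.sum_comm]
      rw [hτ1 x hx e]
      refine Finset.sum_congr rfl fun μ _ => ?_
      by_cases h : μ false = e
      · simp only [h, if_pos rfl, if_true, true_and]
        rw [Finset.sum_ite_eq Finset.univ (μ true)]
        simp
      · simp [h]
  refine ⟨?_, ?_, ?_, ?_⟩
  · intro a x
    by_cases hx : x = xs
    · simp [hx]
    · simp only [if_neg hx]
      rw [Finset.sum_comm, hτ2 x hx a]
      refine Finset.sum_congr rfl fun μ _ => ?_
      by_cases h : μ true = a
      · simp only [h, if_pos rfl, and_true]
        rw [Finset.sum_ite_eq Finset.univ (μ false)]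
        simp
      · simp [h]
  · intro e x x'
    rw [key e x, key e x']
  · intro e a x
    by_cases hx : x = xs
    · simp only [hx, if_pos rfl]
      by_cases h : a = e
      · simpa [h] using hσpsd e xs
      · simp [h, Matrix.PosSemidef.zero]
    · simp only [if_neg hx]
      refine Finset.sum_induction _ _ (fun p q hp hq => hp.add hq) Matrix.PosSemidef.zero
        fun μ _ => ?_
      by_cases h : μ false = e ∧ μ true = a
      · simpa [h] using hτpsd x hx μ
      · simp [h, Matrix.PosSemidef.zero]
  · simp only [if_pos rfl, if_true]
    rw [← Matrix.trace_sum, hσtr xs]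
end

section
/- Let κ ∈ NS(d,d,m-1,m) be a no-signaling behavior and for l = (q_2,...,q_{2m-1}) ∈ ℤ_d^{2m-2} define 𝓕^m_l(t) := κ_B(t+q_2|1)·Π_{k=2}^m g^k_l(t - c_k), where c_k = Σ_{i=3}^{2k-2} q_i (c_2 = 0) and g^k_l(t) := κ(t, t+q_{2k-2}|k,k-1)·κ(t, t-q_{2k-1}|k,k) / (κ_B(t+q_{2k-2}|k-1)·κ_A(t|k)) with the convention g^k_l(t) := 0 if any denominator marginal vanishes. Then Σ over all l ∈ ℤ_d^{2m-2} and t ∈ ℤ_d of 𝓕^m_l(t) equals 1, and each 𝓕^m_l(t) ≥ 0. -/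
open scoped BigOperators

noncomputable section

/-- The component `q_i` (for `i ∈ {2, ..., 2m-1}`) of the tuple
`l = (q_2, ..., q_{2m-1}) ∈ ℤ_d^{2m-2}` (coordinate `i-2` of `l`), and `0` otherwise. -/
def qOf (d m : ℕ) (l : Fin (2 * m - 2) → ZMod d) (i : ℕ) : ZMod d :=
  if h : i - 2 < 2 * m - 2 then l ⟨i - 2, h⟩ else 0

/-- `c_k = Σ_{i=3}^{2k-2} q_i` (so `c_2 = 0`). -/
def cOf (d m : ℕ) (l : Fin (2 * m - 2) → ZMod d) (k : ℕ) : ZMod d :=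
  ∑ i ∈ Finset.Icc 3 (2 * k - 2), qOf d m l i

/-- Alice's marginal `κ_A(a|x)` (computed with Bob's input `1`; for a no-signaling
behavior it is independent of Bob's input). -/
def margA (d : ℕ) [NeZero d] (κ : ℕ → ℕ → ZMod d → ZMod d → ℝ) (x : ℕ) (a : ZMod d) : ℝ :=
  ∑ b : ZMod d, κ x 1 a b

/-- Bob's marginal `κ_B(b|y)` (computed with Alice's input `2`). -/
def margB (d : ℕ) [NeZero d] (κ : ℕ → ℕ → ZMod d → ZMod d → ℝ) (y : ℕ) (b : ZMod d) : ℝ :=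
  ∑ a : ZMod d, κ 2 y a b

/-- The factor `g^k_l(t) = κ(t, t+q_{2k-2}|k,k-1)·κ(t, t-q_{2k-1}|k,k) /
(κ_B(t+q_{2k-2}|k-1)·κ_A(t|k))`, set to `0` whenever a denominator marginal vanishes. -/
def gFun (d m : ℕ) [NeZero d] (κ : ℕ → ℕ → ZMod d → ZMod d → ℝ)
    (l : Fin (2 * m - 2) → ZMod d) (k : ℕ) (t : ZMod d) : ℝ :=
  if margB d κ (k - 1) (t + qOf d m l (2 * k - 2)) = 0 ∨ margA d κ k t = 0 then 0
  else κ k (k - 1) t (t + qOf d m l (2 * k - 2)) * κ k k t (t - qOf d m l (2 * k - 1)) /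
    (margB d κ (k - 1) (t + qOf d m l (2 * k - 2)) * margA d κ k t)

/-- `𝓕^i_l(t) = κ_B(t+q_2|1)·Π_{k=2}^i g^k_l(t - c_k)`. -/
def FFun (d m : ℕ) [NeZero d] (κ : ℕ → ℕ → ZMod d → ZMod d → ℝ)
    (l : Fin (2 * m - 2) → ZMod d) (i : ℕ) (t : ZMod d) : ℝ :=
  margB d κ 1 (t + qOf d m l 2) *
    ∏ k ∈ Finset.Icc 2 i, gFun d m κ l k (t - cOf d m l k)

end


set_option linter.unusedSectionVars false
set_option maxHeartbeats 1000000
section Aux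

variable {d m : ℕ} [NeZero d] {κ : ℕ → ℕ → ZMod d → ZMod d → ℝ}

lemma sum_update {N : ℕ} (j : Fin N) (f : (Fin N → ZMod d) → ℝ) :
    ∑ l : Fin N → ZMod d, ∑ q : ZMod d, f (Function.update l j q) = d * ∑ l, f l := by
  have hinv : Function.Involutive (fun p : (Fin N → ZMod d) × ZMod d =>
      (Function.update p.1 j p.2, p.1 j)) := by
    intro p
    simp [Function.update_idem, Function.update_eq_self]
  have h1 : ∑ p : (Fin N → ZMod d) × ZMod d, f (Function.update p.1 j p.2)
      = ∑ p : (Fin N → ZMod d) × ZMod d, f p.1 :=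
    Fintype.sum_bijective _ hinv.bijective _ _ (fun p => rfl)
  calc ∑ l : Fin N → ZMod d, ∑ q : ZMod d, f (Function.update l j q)
      = ∑ p : (Fin N → ZMod d) × ZMod d, f (Function.update p.1 j p.2) := by
        rw [Fintype.sum_prod_type]
    _ = ∑ p : (Fin N → ZMod d) × ZMod d, f p.1 := h1
    _ = d * ∑ l, f l := by
        rw [Fintype.sum_prod_type]
        simp [ZMod.card, Finset.mul_sum, mul_comm]

lemma qOf_update_ne (l : Fin (2 * m - 2) → ZMod d) (j : Fin (2 * m - 2)) (v : ZMod d)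
    (n : ℕ) (h : n - 2 ≠ j.val) :
    qOf d m (Function.update l j v) n = qOf d m l n := by
  unfold qOf
  split
  · rw [Function.update_of_ne (Fin.ne_of_val_ne h)]
  · rfl

lemma qOf_update_eq (l : Fin (2 * m - 2) → ZMod d) (j : Fin (2 * m - 2)) (v : ZMod d)
    (n : ℕ) (h : n - 2 = j.val) :
    qOf d m (Function.update l j v) n = v := by
  unfold qOf
  rw [dif_pos (h ▸ j.isLt)]
  have : (⟨n - 2, h ▸ j.isLt⟩ : Fin (2 * m - 2)) = j := Fin.ext h
  rw [this, Function.update_self]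

lemma cOf_two (l : Fin (2 * m - 2) → ZMod d) : cOf d m l 2 = 0 := by
  simp [cOf, Finset.Icc_eq_empty_of_lt (by omega : (2*2-2 : ℕ) < 3)]




variable {d m : ℕ} [NeZero d] {κ : ℕ → ℕ → ZMod d → ZMod d → ℝ}

lemma margA_nonneg (hpos : ∀ x y, 2 ≤ x → x ≤ m → 1 ≤ y → y ≤ m → ∀ a b, 0 ≤ κ x y a b)
    (hm : 2 ≤ m) {x : ℕ} (hx2 : 2 ≤ x) (hxm : x ≤ m) (a : ZMod d) :
    0 ≤ margA d κ x a :=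
  Finset.sum_nonneg fun b _ => hpos x 1 hx2 hxm le_rfl (by omega) a b

lemma margB_nonneg (hpos : ∀ x y, 2 ≤ x → x ≤ m → 1 ≤ y → y ≤ m → ∀ a b, 0 ≤ κ x y a b)
    (hm : 2 ≤ m) {y : ℕ} (hy1 : 1 ≤ y) (hym : y ≤ m) (b : ZMod d) :
    0 ≤ margB d κ y b :=
  Finset.sum_nonneg fun a _ => hpos 2 y le_rfl hm hy1 hym a b

lemma margA_eq (hnsA : ∀ x y y', 2 ≤ x → x ≤ m → 1 ≤ y → y ≤ m → 1 ≤ y' → y' ≤ m → ∀ a,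
      ∑ b : ZMod d, κ x y a b = ∑ b : ZMod d, κ x y' a b)
    (hm : 2 ≤ m) {x y : ℕ} (hx2 : 2 ≤ x) (hxm : x ≤ m) (hy1 : 1 ≤ y) (hym : y ≤ m)
    (a : ZMod d) : ∑ b : ZMod d, κ x y a b = margA d κ x a :=
  hnsA x y 1 hx2 hxm hy1 hym le_rfl (by omega) a

lemma margB_eq (hnsB : ∀ x x' y, 2 ≤ x → x ≤ m → 2 ≤ x' → x' ≤ m → 1 ≤ y → y ≤ m → ∀ b,
      ∑ a : ZMod d, κ x y a b = ∑ a : ZMod d, κ x' y a b)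
    (hm : 2 ≤ m) {x y : ℕ} (hx2 : 2 ≤ x) (hxm : x ≤ m) (hy1 : 1 ≤ y) (hym : y ≤ m)
    (b : ZMod d) : ∑ a : ZMod d, κ x y a b = margB d κ y b :=
  hnsB x 2 y hx2 hxm le_rfl hm hy1 hym b

lemma margA_zero (hpos : ∀ x y, 2 ≤ x → x ≤ m → 1 ≤ y → y ≤ m → ∀ a b, 0 ≤ κ x y a b)
    (hnsA : ∀ x y y', 2 ≤ x → x ≤ m → 1 ≤ y → y ≤ m → 1 ≤ y' → y' ≤ m → ∀ a,
      ∑ b : ZMod d, κ x y a b = ∑ b : ZMod d, κ x y' a b)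
    (hm : 2 ≤ m) {x y : ℕ} (hx2 : 2 ≤ x) (hxm : x ≤ m) (hy1 : 1 ≤ y) (hym : y ≤ m)
    {a : ZMod d} (h : margA d κ x a = 0) (b : ZMod d) : κ x y a b = 0 := by
  have hs : ∑ b : ZMod d, κ x y a b = 0 := by
    rw [margA_eq hnsA hm hx2 hxm hy1 hym a, h]
  exact (Finset.sum_eq_zero_iff_of_nonneg
    (fun b _ => hpos x y hx2 hxm hy1 hym a b)).mp hs b (Finset.mem_univ b)

lemma margB_zero (hpos : ∀ x y, 2 ≤ x → x ≤ m → 1 ≤ y → y ≤ m → ∀ a b, 0 ≤ κ x y a b)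
    (hnsB : ∀ x x' y, 2 ≤ x → x ≤ m → 2 ≤ x' → x' ≤ m → 1 ≤ y → y ≤ m → ∀ b,
      ∑ a : ZMod d, κ x y a b = ∑ a : ZMod d, κ x' y a b)
    (hm : 2 ≤ m) {x y : ℕ} (hx2 : 2 ≤ x) (hxm : x ≤ m) (hy1 : 1 ≤ y) (hym : y ≤ m)
    {b : ZMod d} (h : margB d κ y b = 0) (a : ZMod d) : κ x y a b = 0 := by
  have hs : ∑ a : ZMod d, κ x y a b = 0 := by
    rw [margB_eq hnsB hm hx2 hxm hy1 hym b, h]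
  exact (Finset.sum_eq_zero_iff_of_nonneg
    (fun a _ => hpos x y hx2 hxm hy1 hym a b)).mp hs a (Finset.mem_univ a)

lemma sum_sub_right (x y : ℕ) (s : ZMod d) :
    ∑ b : ZMod d, κ x y s (s - b) = ∑ b : ZMod d, κ x y s b :=
  Fintype.sum_equiv (Equiv.subLeft s) _ _ (fun _ => rfl)

lemma sum_sub_fst (x y : ℕ) (u : ZMod d) :
    ∑ a : ZMod d, κ x y (u - a) u = ∑ a : ZMod d, κ x y a u :=
  Fintype.sum_equiv (Equiv.subLeft u) _ _ (fun _ => rfl)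

lemma sum_add_right (x y : ℕ) (t : ZMod d) :
    ∑ a : ZMod d, κ x y t (t + a) = ∑ b : ZMod d, κ x y t b :=
  Fintype.sum_equiv (Equiv.addLeft t) _ _ (fun _ => rfl)

lemma collapse
    (hpos : ∀ x y, 2 ≤ x → x ≤ m → 1 ≤ y → y ≤ m → ∀ a b, 0 ≤ κ x y a b)
    (hnsA : ∀ x y y', 2 ≤ x → x ≤ m → 1 ≤ y → y ≤ m → 1 ≤ y' → y' ≤ m → ∀ a,
      ∑ b : ZMod d, κ x y a b = ∑ b : ZMod d, κ x y' a b)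
    (hnsB : ∀ x x' y, 2 ≤ x → x ≤ m → 2 ≤ x' → x' ≤ m → 1 ≤ y → y ≤ m → ∀ b,
      ∑ a : ZMod d, κ x y a b = ∑ a : ZMod d, κ x' y a b)
    (hm : 2 ≤ m) {k : ℕ} (hk2 : 2 ≤ k) (hkm : k ≤ m) (u : ZMod d) :
    ∑ a : ZMod d, ∑ b : ZMod d,
      (if margB d κ (k-1) u = 0 ∨ margA d κ k (u - a) = 0 then (0:ℝ) else
        κ k (k-1) (u-a) u * κ k k (u-a) (u - a - b) /
          (margB d κ (k-1) u * margA d κ k (u-a)))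
    = if margB d κ (k-1) u = 0 then 0 else 1 := by
  by_cases hB : margB d κ (k-1) u = 0
  · simp [hB]
  · rw [if_neg hB]
    have hstep : ∀ a : ZMod d,
        (∑ b : ZMod d, if margB d κ (k-1) u = 0 ∨ margA d κ k (u - a) = 0 then (0:ℝ) else
          κ k (k-1) (u-a) u * κ k k (u-a) (u - a - b) /
            (margB d κ (k-1) u * margA d κ k (u-a)))
        = κ k (k-1) (u-a) u / margB d κ (k-1) u := by
      intro a
      by_cases hA : margA d κ k (u - a) = 0
      · have h0 : κ k (k-1) (u-a) u = 0 :=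
          margA_zero hpos hnsA hm hk2 hkm (by omega) (by omega) hA u
        simp [hA, h0]
      · simp only [hB, hA, or_self, if_false, false_or, if_neg hA]
        rw [← Finset.sum_div, ← Finset.mul_sum]
        have h1 : ∑ b : ZMod d, κ k k (u-a) (u - a - b) = margA d κ k (u - a) := by
          rw [sum_sub_right, margA_eq hnsA hm hk2 hkm (by omega) hkm]
        rw [h1, mul_div_mul_right _ _ hA]
    rw [Finset.sum_congr rfl (fun a _ => hstep a), ← Finset.sum_div]
    have h2 : ∑ a : ZMod d, κ k (k-1) (u-a) u = margB d κ (k-1) u := by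
      rw [sum_sub_fst, margB_eq hnsB hm hk2 hkm (by omega) (by omega)]
    rw [h2, div_self hB]

end Aux
section Aux3
variable {d m : ℕ} [NeZero d] {κ : ℕ → ℕ → ZMod d → ZMod d → ℝ}

lemma qOf_update_ne' (l : Fin (2 * m - 2) → ZMod d) (jv : ℕ) (hj : jv < 2 * m - 2)
    (v : ZMod d) (n : ℕ) (h : n - 2 ≠ jv) :
    qOf d m (Function.update l ⟨jv, hj⟩ v) n = qOf d m l n :=
  qOf_update_ne l ⟨jv, hj⟩ v n h

lemma qOf_update_eq' (l : Fin (2 * m - 2) → ZMod d) (jv : ℕ) (hj : jv < 2 * m - 2)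
    (v : ZMod d) (n : ℕ) (h : n - 2 = jv) :
    qOf d m (Function.update l ⟨jv, hj⟩ v) n = v :=
  qOf_update_eq l ⟨jv, hj⟩ v n h

lemma gFun_nonneg (hpos : ∀ x y, 2 ≤ x → x ≤ m → 1 ≤ y → y ≤ m → ∀ a b, 0 ≤ κ x y a b)
    (hm : 2 ≤ m) {k : ℕ} (hk2 : 2 ≤ k) (hkm : k ≤ m) (l : Fin (2 * m - 2) → ZMod d)
    (s : ZMod d) : 0 ≤ gFun d m κ l k s := by
  unfold gFun
  split
  · exact le_refl 0
  · exact div_nonneg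
      (mul_nonneg (hpos k (k-1) hk2 hkm (by omega) (by omega) _ _)
        (hpos k k hk2 hkm (by omega) hkm _ _))
      (mul_nonneg (margB_nonneg hpos hm (by omega) (by omega) _)
        (margA_nonneg hpos hm hk2 hkm _))

lemma FFun_nonneg' (hpos : ∀ x y, 2 ≤ x → x ≤ m → 1 ≤ y → y ≤ m → ∀ a b, 0 ≤ κ x y a b)
    (hm : 2 ≤ m) {i : ℕ} (him : i ≤ m) (l : Fin (2 * m - 2) → ZMod d) (t : ZMod d) :
    0 ≤ FFun d m κ l i t :=
  mul_nonneg (margB_nonneg hpos hm le_rfl (by omega) _)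
    (Finset.prod_nonneg fun k hk => by
      obtain ⟨h1, h2⟩ := Finset.mem_Icc.mp hk
      exact gFun_nonneg hpos hm h1 (le_trans h2 him) l _)

lemma sum_update2 {N : ℕ} (j1 j2 : Fin N) (hne : j1 ≠ j2) (f : (Fin N → ZMod d) → ℝ) :
    ∑ l : Fin N → ZMod d, ∑ a : ZMod d, ∑ b : ZMod d,
      f (Function.update (Function.update l j1 a) j2 b)
    = d * (d * ∑ l, f l) := by
  calc ∑ l : Fin N → ZMod d, ∑ a : ZMod d, ∑ b : ZMod d,
        f (Function.update (Function.update l j1 a) j2 b)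
      = ∑ l : Fin N → ZMod d, ∑ b : ZMod d,
          (fun l' => ∑ a : ZMod d, f (Function.update l' j1 a)) (Function.update l j2 b) := by
        refine Finset.sum_congr rfl fun l _ => ?_
        rw [Finset.sum_comm]
        exact Finset.sum_congr rfl fun b _ => Finset.sum_congr rfl fun a _ => by
          rw [Function.update_comm hne]
    _ = d * ∑ l : Fin N → ZMod d, ∑ a : ZMod d, f (Function.update l j1 a) :=
        sum_update j2 (fun l' => ∑ a : ZMod d, f (Function.update l' j1 a))
    _ = d * (d * ∑ l, f l) := by rw [sum_update j1 f]

lemma step_pointwise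
    (hpos : ∀ x y, 2 ≤ x → x ≤ m → 1 ≤ y → y ≤ m → ∀ a b, 0 ≤ κ x y a b)
    (hnsA : ∀ x y y', 2 ≤ x → x ≤ m → 1 ≤ y → y ≤ m → 1 ≤ y' → y' ≤ m → ∀ a,
      ∑ b : ZMod d, κ x y a b = ∑ b : ZMod d, κ x y' a b)
    (hnsB : ∀ x x' y, 2 ≤ x → x ≤ m → 2 ≤ x' → x' ≤ m → 1 ≤ y → y ≤ m → ∀ b,
      ∑ a : ZMod d, κ x y a b = ∑ a : ZMod d, κ x' y a b)
    (hm : 2 ≤ m) {i : ℕ} (hi2 : 2 ≤ i) (him : i + 1 ≤ m)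
    (l : Fin (2 * m - 2) → ZMod d) (t : ZMod d) :
    ∑ a : ZMod d, ∑ b : ZMod d,
      FFun d m κ (Function.update (Function.update l ⟨2*i-2, by omega⟩ a)
        ⟨2*i-1, by omega⟩ b) (i+1) t
    = FFun d m κ l i t := by
  have hj1 : (2*i-2 : ℕ) < 2*m-2 := by omega
  have hj2 : (2*i-1 : ℕ) < 2*m-2 := by omega
  set u : ZMod d := t - cOf d m l i - qOf d m l (2*i-1) with hu
  -- q components of the updated tuple
  have hq : ∀ (a b : ZMod d) (n : ℕ), n ≤ 2*i-1 →
      qOf d m (Function.update (Function.update l ⟨2*i-2, hj1⟩ a) ⟨2*i-1, hj2⟩ b) n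
      = qOf d m l n := by
    intro a b n hn
    rw [qOf_update_ne' _ _ _ _ _ (by omega), qOf_update_ne' _ _ _ _ _ (by omega)]
  have hq1 : ∀ (a b : ZMod d),
      qOf d m (Function.update (Function.update l ⟨2*i-2, hj1⟩ a) ⟨2*i-1, hj2⟩ b) (2*i)
      = a := by
    intro a b
    rw [qOf_update_ne' _ _ _ _ _ (by omega), qOf_update_eq' _ _ _ _ _ (by omega)]
  have hq2 : ∀ (a b : ZMod d),
      qOf d m (Function.update (Function.update l ⟨2*i-2, hj1⟩ a) ⟨2*i-1, hj2⟩ b) (2*i+1)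
      = b := by
    intro a b
    rw [qOf_update_eq' _ _ _ _ _ (by omega)]
  have hc : ∀ (a b : ZMod d) (k : ℕ), k ≤ i →
      cOf d m (Function.update (Function.update l ⟨2*i-2, hj1⟩ a) ⟨2*i-1, hj2⟩ b) k
      = cOf d m l k := by
    intro a b k hk
    unfold cOf
    refine Finset.sum_congr rfl fun n hn => ?_
    obtain ⟨h1, h2⟩ := Finset.mem_Icc.mp hn
    exact hq a b n (by omega)
  have hg : ∀ (a b : ZMod d) (k : ℕ), 2 ≤ k → k ≤ i → ∀ s : ZMod d,
      gFun d m κ (Function.update (Function.update l ⟨2*i-2, hj1⟩ a) ⟨2*i-1, hj2⟩ b) k s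
      = gFun d m κ l k s := by
    intro a b k h1 h2 s
    unfold gFun
    rw [hq a b (2*k-2) (by omega), hq a b (2*k-1) (by omega)]
  have hcsucc : ∀ (a b : ZMod d),
      cOf d m (Function.update (Function.update l ⟨2*i-2, hj1⟩ a) ⟨2*i-1, hj2⟩ b) (i+1)
      = cOf d m l i + qOf d m l (2*i-1) + a := by
    intro a b
    have hsplit : ∀ (f : ℕ → ZMod d), ∑ n ∈ Finset.Icc 3 (2*(i+1)-2), f n
        = (∑ n ∈ Finset.Icc 3 (2*i-2), f n) + f (2*i-1) + f (2*i) := by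
      intro f
      have e1 : 2*(i+1)-2 = (2*i-1)+1 := by omega
      have e2 : (2*i-1 : ℕ) = (2*i-2)+1 := by omega
      rw [e1, Finset.sum_Icc_succ_top (by omega : 3 ≤ (2*i-1)+1), e2,
        Finset.sum_Icc_succ_top (by omega : 3 ≤ (2*i-2)+1),
        (by omega : (2*i-2)+1+1 = 2*i)]
    unfold cOf
    rw [hsplit, hq1 a b]
    congr 2
    · exact Finset.sum_congr rfl fun n hn => by
        obtain ⟨h1, h2⟩ := Finset.mem_Icc.mp hn
        exact hq a b n (by omega)
    · exact hq a b (2*i-1) le_rfl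
  -- main computation
  have hFF : ∀ (a b : ZMod d),
      FFun d m κ (Function.update (Function.update l ⟨2*i-2, hj1⟩ a) ⟨2*i-1, hj2⟩ b) (i+1) t
      = FFun d m κ l i t *
        (if margB d κ i u = 0 ∨ margA d κ (i+1) (u - a) = 0 then (0:ℝ) else
          κ (i+1) i (u-a) u * κ (i+1) (i+1) (u-a) (u - a - b) /
            (margB d κ i u * margA d κ (i+1) (u-a))) := by
    intro a b
    unfold FFun
    rw [Finset.prod_Icc_succ_top (by omega : 2 ≤ i+1)]
    rw [hq a b 2 (by omega)]
    have hprod : ∏ k ∈ Finset.Icc 2 i,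
        gFun d m κ (Function.update (Function.update l ⟨2*i-2, hj1⟩ a) ⟨2*i-1, hj2⟩ b) k
          (t - cOf d m (Function.update (Function.update l ⟨2*i-2, hj1⟩ a) ⟨2*i-1, hj2⟩ b) k)
        = ∏ k ∈ Finset.Icc 2 i, gFun d m κ l k (t - cOf d m l k) := by
      refine Finset.prod_congr rfl fun k hk => ?_
      obtain ⟨h1, h2⟩ := Finset.mem_Icc.mp hk
      rw [hc a b k h2, hg a b k h1 h2]
    rw [hprod, hcsucc a b]
    have harg : t - (cOf d m l i + qOf d m l (2*i-1) + a) = u - a := by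
      rw [hu]; ring
    rw [harg]
    have hgtop : gFun d m κ (Function.update (Function.update l ⟨2*i-2, hj1⟩ a)
        ⟨2*i-1, hj2⟩ b) (i+1) (u - a)
        = (if margB d κ i u = 0 ∨ margA d κ (i+1) (u - a) = 0 then (0:ℝ) else
          κ (i+1) i (u-a) u * κ (i+1) (i+1) (u-a) (u - a - b) /
            (margB d κ i u * margA d κ (i+1) (u-a))) := by
      unfold gFun
      have e5 : 2*(i+1)-2 = 2*i := by omega
      have e6 : 2*(i+1)-1 = 2*i+1 := by omega
      have e7 : (i+1)-1 = i := by omega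
      rw [e5, e6, e7, hq1 a b, hq2 a b, sub_add_cancel]
    rw [hgtop]
    ring
  rw [Finset.sum_congr rfl fun a _ => Finset.sum_congr rfl fun b _ => hFF a b]
  have := collapse hpos hnsA hnsB hm (k := i+1) (by omega) him u
  rw [Nat.add_sub_cancel] at this
  simp only [← Finset.mul_sum]
  rw [this]
  by_cases hBu : margB d κ i u = 0
  · rw [if_pos hBu, mul_zero]
    have hκ0 : κ i i (t - cOf d m l i) (t - cOf d m l i - qOf d m l (2*i-1)) = 0 := by
      have : t - cOf d m l i - qOf d m l (2*i-1) = u := hu.symm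
      rw [this]
      exact margB_zero hpos hnsB hm hi2 (by omega) (by omega) (by omega) hBu _
    have hg0 : gFun d m κ l i (t - cOf d m l i) = 0 := by
      unfold gFun
      split
      · rfl
      · rw [hκ0, mul_zero, zero_div]
    unfold FFun
    rw [Finset.prod_eq_zero (Finset.mem_Icc.mpr ⟨hi2, le_rfl⟩ : i ∈ Finset.Icc 2 i) hg0,
      mul_zero]
  · rw [if_neg hBu, mul_one]

end Aux3
section Aux4
variable {d m : ℕ} [NeZero d] {κ : ℕ → ℕ → ZMod d → ZMod d → ℝ}

lemma base_pointwise
    (hpos : ∀ x y, 2 ≤ x → x ≤ m → 1 ≤ y → y ≤ m → ∀ a b, 0 ≤ κ x y a b)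
    (hnorm : ∀ x y, 2 ≤ x → x ≤ m → 1 ≤ y → y ≤ m →
      ∑ a : ZMod d, ∑ b : ZMod d, κ x y a b = 1)
    (hnsA : ∀ x y y', 2 ≤ x → x ≤ m → 1 ≤ y → y ≤ m → 1 ≤ y' → y' ≤ m → ∀ a,
      ∑ b : ZMod d, κ x y a b = ∑ b : ZMod d, κ x y' a b)
    (hm : 2 ≤ m) (l : Fin (2 * m - 2) → ZMod d) :
    ∑ t : ZMod d, ∑ a : ZMod d, ∑ b : ZMod d,
      FFun d m κ (Function.update (Function.update l ⟨0, by omega⟩ a) ⟨1, by omega⟩ b) 2 t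
    = 1 := by
  have h0 : (0:ℕ) < 2*m-2 := by omega
  have h1 : (1:ℕ) < 2*m-2 := by omega
  have hFF : ∀ (t a b : ZMod d),
      FFun d m κ (Function.update (Function.update l ⟨0, h0⟩ a) ⟨1, h1⟩ b) 2 t
      = margB d κ 1 (t + a) *
        (if margB d κ 1 (t + a) = 0 ∨ margA d κ 2 t = 0 then (0:ℝ) else
          κ 2 1 t (t + a) * κ 2 2 t (t - b) / (margB d κ 1 (t + a) * margA d κ 2 t)) := by
    intro t a b
    have hqa : qOf d m (Function.update (Function.update l ⟨0, h0⟩ a) ⟨1, h1⟩ b) 2 = a := by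
      rw [qOf_update_ne' _ _ _ _ _ (by omega), qOf_update_eq' _ _ _ _ _ (by omega)]
    have hqb : qOf d m (Function.update (Function.update l ⟨0, h0⟩ a) ⟨1, h1⟩ b) 3 = b := by
      rw [qOf_update_eq' _ _ _ _ _ (by omega)]
    unfold FFun
    rw [Finset.Icc_self, Finset.prod_singleton, cOf_two, sub_zero]
    unfold gFun
    norm_num
    rw [hqa, hqb]
  simp only [hFF]
  have hinner : ∀ t a : ZMod d,
      (∑ b : ZMod d, margB d κ 1 (t + a) *
        (if margB d κ 1 (t + a) = 0 ∨ margA d κ 2 t = 0 then (0:ℝ) else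
          κ 2 1 t (t + a) * κ 2 2 t (t - b) / (margB d κ 1 (t + a) * margA d κ 2 t)))
      = κ 2 1 t (t + a) := by
    intro t a
    by_cases hB : margB d κ 1 (t + a) = 0
    · have h0' : κ 2 1 t (t + a) = 0 :=
        (Finset.sum_eq_zero_iff_of_nonneg
          (fun a' _ => hpos 2 1 le_rfl hm le_rfl (by omega) a' (t + a))).mp hB t
          (Finset.mem_univ t)
      simp [hB, h0']
    · by_cases hA : margA d κ 2 t = 0
      · have h0' : κ 2 1 t (t + a) = 0 :=
          (Finset.sum_eq_zero_iff_of_nonneg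
            (fun b' _ => hpos 2 1 le_rfl hm le_rfl (by omega) t b')).mp hA (t + a)
            (Finset.mem_univ (t + a))
        simp [hA, h0']
      · simp only [hB, hA, or_self, if_false, false_or, if_neg hA]
        rw [← Finset.mul_sum, ← Finset.sum_div, ← Finset.mul_sum]
        have hs : ∑ b : ZMod d, κ 2 2 t (t - b) = margA d κ 2 t := by
          rw [sum_sub_right, margA_eq hnsA hm le_rfl hm (by omega) hm]
        rw [hs, mul_div_mul_right _ _ hA, mul_div_cancel₀ _ hB]
  simp only [hinner]
  have hout : ∀ t : ZMod d, ∑ a : ZMod d, κ 2 1 t (t + a) = ∑ b : ZMod d, κ 2 1 t b :=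
    fun t => sum_add_right 2 1 t
  simp only [hout]
  exact hnorm 2 1 le_rfl hm le_rfl (by omega)

lemma main_aux
    (hpos : ∀ x y, 2 ≤ x → x ≤ m → 1 ≤ y → y ≤ m → ∀ a b, 0 ≤ κ x y a b)
    (hnorm : ∀ x y, 2 ≤ x → x ≤ m → 1 ≤ y → y ≤ m →
      ∑ a : ZMod d, ∑ b : ZMod d, κ x y a b = 1)
    (hnsA : ∀ x y y', 2 ≤ x → x ≤ m → 1 ≤ y → y ≤ m → 1 ≤ y' → y' ≤ m → ∀ a,
      ∑ b : ZMod d, κ x y a b = ∑ b : ZMod d, κ x y' a b)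
    (hnsB : ∀ x x' y, 2 ≤ x → x ≤ m → 2 ≤ x' → x' ≤ m → 1 ≤ y → y ≤ m → ∀ b,
      ∑ a : ZMod d, κ x y a b = ∑ a : ZMod d, κ x' y a b)
    (hm : 2 ≤ m) :
    ∀ i, 2 ≤ i → i ≤ m →
      ∑ l : Fin (2 * m - 2) → ZMod d, ∑ t : ZMod d, FFun d m κ l i t
        = (d:ℝ) ^ (2 * (m - i)) := by
  have hd0 : (d:ℝ) ≠ 0 := Nat.cast_ne_zero.mpr (NeZero.ne d)
  intro i hi2
  induction i, hi2 using Nat.le_induction with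
  | base =>
    intro him
    have h0 : (0:ℕ) < 2*m-2 := by omega
    have h1 : (1:ℕ) < 2*m-2 := by omega
    have hne : (⟨0, h0⟩ : Fin (2*m-2)) ≠ ⟨1, h1⟩ :=
      Fin.ne_of_val_ne (show (0:ℕ) ≠ 1 by omega)
    have key := sum_update2 (d := d) ⟨0, h0⟩ ⟨1, h1⟩ hne
      (fun l => ∑ t : ZMod d, FFun d m κ l 2 t)
    have key2 : ∑ l : Fin (2*m-2) → ZMod d, ∑ a : ZMod d, ∑ b : ZMod d,
        (fun l => ∑ t : ZMod d, FFun d m κ l 2 t)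
          (Function.update (Function.update l ⟨0, h0⟩ a) ⟨1, h1⟩ b)
        = ∑ l : Fin (2*m-2) → ZMod d, (1:ℝ) := by
      refine Finset.sum_congr rfl fun l _ => ?_
      simp only
      rw [Finset.sum_congr rfl fun a (_ : a ∈ Finset.univ) =>
        (Finset.sum_comm : ∑ b : ZMod d, ∑ t : ZMod d, FFun d m κ
          (Function.update (Function.update l ⟨0, h0⟩ a) ⟨1, h1⟩ b) 2 t = _),
        Finset.sum_comm]
      exact base_pointwise hpos hnorm hnsA hm l
    rw [key2] at key
    have hcard : ∑ l : Fin (2*m-2) → ZMod d, (1:ℝ) = (d:ℝ) ^ (2*m-2) := by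
      simp [Finset.sum_const, Finset.card_univ, ZMod.card]
    rw [hcard] at key
    have e : 2*m-2 = 2*(m-2)+1+1 := by omega
    have key3 : (d:ℝ) * ((d:ℝ) * (d:ℝ) ^ (2*(m-2)))
        = (d:ℝ) * ((d:ℝ) * ∑ l : Fin (2*m-2) → ZMod d, ∑ t : ZMod d, FFun d m κ l 2 t) := by
      rw [← key, e, pow_succ, pow_succ]; ring
    exact (mul_left_cancel₀ hd0 (mul_left_cancel₀ hd0 key3)).symm
  | succ i hi2' ih =>
    intro him
    have ihv := ih (by omega)
    have hj1 : (2*i-2:ℕ) < 2*m-2 := by omega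
    have hj2 : (2*i-1:ℕ) < 2*m-2 := by omega
    have hne : (⟨2*i-2, hj1⟩ : Fin (2*m-2)) ≠ ⟨2*i-1, hj2⟩ :=
      Fin.ne_of_val_ne (show (2*i-2:ℕ) ≠ 2*i-1 by omega)
    have key := sum_update2 (d := d) ⟨2*i-2, hj1⟩ ⟨2*i-1, hj2⟩ hne
      (fun l => ∑ t : ZMod d, FFun d m κ l (i+1) t)
    have key2 : ∑ l : Fin (2*m-2) → ZMod d, ∑ a : ZMod d, ∑ b : ZMod d,
        (fun l => ∑ t : ZMod d, FFun d m κ l (i+1) t)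
          (Function.update (Function.update l ⟨2*i-2, hj1⟩ a) ⟨2*i-1, hj2⟩ b)
        = ∑ l : Fin (2*m-2) → ZMod d, ∑ t : ZMod d, FFun d m κ l i t := by
      refine Finset.sum_congr rfl fun l _ => ?_
      simp only
      rw [Finset.sum_congr rfl fun a (_ : a ∈ Finset.univ) =>
        (Finset.sum_comm : ∑ b : ZMod d, ∑ t : ZMod d, FFun d m κ
          (Function.update (Function.update l ⟨2*i-2, hj1⟩ a) ⟨2*i-1, hj2⟩ b) (i+1) t = _),
        Finset.sum_comm]
      refine Finset.sum_congr rfl fun t _ => ?_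
      exact step_pointwise hpos hnsA hnsB hm hi2' him l t
    rw [key2, ihv] at key
    have e : 2*(m-i) = 2*(m-(i+1))+1+1 := by omega
    have key3 : (d:ℝ) * ((d:ℝ) * (d:ℝ) ^ (2*(m-(i+1))))
        = (d:ℝ) * ((d:ℝ) * ∑ l : Fin (2*m-2) → ZMod d, ∑ t : ZMod d,
          FFun d m κ l (i+1) t) := by
      rw [← key, e, pow_succ, pow_succ]; ring
    exact (mul_left_cancel₀ hd0 (mul_left_cancel₀ hd0 key3)).symm

end Aux4

/-- for a no-signaling behavior `κ ∈ NS(d,d,m-1,m)` (Alice's inputs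
`2,...,m`, Bob's inputs `1,...,m`), the quantities `𝓕^m_l(t)` are nonnegative and sum
to `1` over all `l ∈ ℤ_d^{2m-2}` and `t ∈ ℤ_d`. -/
theorem FFun_nonneg_and_sum_eq_one
    (d m : ℕ) [NeZero d] (hd : 2 ≤ d) (hm : 2 ≤ m)
    (κ : ℕ → ℕ → ZMod d → ZMod d → ℝ)
    (hpos : ∀ x y, 2 ≤ x → x ≤ m → 1 ≤ y → y ≤ m → ∀ a b, 0 ≤ κ x y a b)
    (hnorm : ∀ x y, 2 ≤ x → x ≤ m → 1 ≤ y → y ≤ m →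
      ∑ a : ZMod d, ∑ b : ZMod d, κ x y a b = 1)
    (hnsA : ∀ x y y', 2 ≤ x → x ≤ m → 1 ≤ y → y ≤ m → 1 ≤ y' → y' ≤ m → ∀ a,
      ∑ b : ZMod d, κ x y a b = ∑ b : ZMod d, κ x y' a b)
    (hnsB : ∀ x x' y, 2 ≤ x → x ≤ m → 2 ≤ x' → x' ≤ m → 1 ≤ y → y ≤ m → ∀ b,
      ∑ a : ZMod d, κ x y a b = ∑ a : ZMod d, κ x' y a b) :
    (∀ (l : Fin (2 * m - 2) → ZMod d) (t : ZMod d), 0 ≤ FFun d m κ l m t) ∧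
    ∑ l : Fin (2 * m - 2) → ZMod d, ∑ t : ZMod d, FFun d m κ l m t = 1 := by
  
  constructor
  · exact fun l t => FFun_nonneg' hpos hm le_rfl l t
  · have := main_aux hpos hnorm hnsA hnsB hm m hm le_rfl
    rwa [Nat.sub_self, mul_zero, pow_zero] at this
end

section
/- With 𝓕^m_l as above, the telescoping identity Σ_{q_{2i},...,q_{2m-1} ∈ ℤ_d} 𝓕^m_l(t) = 𝓕^i_l(t) holds for all t ∈ ℤ_d, all l, and all 2 ≤ i ≤ m, where 𝓕^i_l(t) := κ_B(t+q_2|1)·Π_{k=2}^i g^k_l(t - c_k). -/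
open scoped BigOperators

/-! Sum out the free coordinates two at a time, from the top down. Passing from level `k + 1`
to level `k` sums the last factor `g^{k+1}` over `q_{2k} = a` and `q_{2k+1} = b`; its argument
is `s - a`, where `s = t - c_k - q_{2k-1}` does not depend on `a, b`. Writing `t' = s - a`,
the sum over `b` of `κ(t', t' - b|k+1, k+1)` is `κ_A(t'|k+1)` and then the sum over `a` of
`κ(t', s|k+1, k)` is `κ_B(s|k)`, so the two sums give `1`. The exception is `κ_B(s|k) = 0`;
but then `κ(·, s|k, k)` vanishes, hence so does the factor `g^k` of `𝓕^k`. -/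

open Finset Function

section AgreeingBelow

variable {α : Type*} [Fintype α] [DecidableEq α] {n : ℕ}

def agreeingBelow (l : Fin n → α) (p : ℕ) : Finset (Fin n → α) :=
  univ.filter fun l' => ∀ j : Fin n, (j : ℕ) < p → l' j = l j

lemma agreeingBelow_of_le (l : Fin n → α) {p : ℕ} (hp : n ≤ p) : agreeingBelow l p = {l} := by
  ext l'
  simp only [agreeingBelow, mem_filter, mem_univ, true_and, mem_singleton]
  exact ⟨fun h => funext fun j => h j (by omega), fun h j _ => h ▸ rfl⟩

lemma sum_agreeingBelow_succ {M : Type*} [AddCommMonoid M] (F : (Fin n → α) → M)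
    (l : Fin n → α) {p : ℕ} (hp : p < n) :
    ∑ l' ∈ agreeingBelow l p, F l' =
      ∑ a, ∑ l' ∈ agreeingBelow (update l ⟨p, hp⟩ a) (p + 1), F l' := by
  rw [← sum_fiberwise (agreeingBelow l p) (fun l' => l' ⟨p, hp⟩) F]
  refine sum_congr rfl fun a _ => sum_congr ?_ fun _ _ => rfl
  ext l'
  simp only [agreeingBelow, mem_filter, mem_univ, true_and]
  constructor
  · rintro ⟨hbelow, rfl⟩ j hj
    rcases Nat.lt_succ_iff_lt_or_eq.mp hj with hj | hj
    · rw [update_of_ne (Fin.ne_of_val_ne hj.ne), hbelow j hj]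
    · obtain rfl : j = ⟨p, hp⟩ := Fin.ext hj
      rw [update_self]
  · intro h
    refine ⟨fun j hj => ?_, ?_⟩
    · rw [h j (by omega), update_of_ne (Fin.ne_of_val_ne hj.ne)]
    · rw [h _ (Nat.lt_succ_self p), update_self]

end AgreeingBelow

structure IsNoSignaling (d m : ℕ) [NeZero d] (κ : ℕ → ℕ → ZMod d → ZMod d → ℝ) : Prop where
  nonneg : ∀ x y, 2 ≤ x → x ≤ m → 1 ≤ y → y ≤ m → ∀ a b, 0 ≤ κ x y a b
  sum_right_eq : ∀ x y y', 2 ≤ x → x ≤ m → 1 ≤ y → y ≤ m → 1 ≤ y' → y' ≤ m → ∀ a,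
    ∑ b : ZMod d, κ x y a b = ∑ b : ZMod d, κ x y' a b
  sum_left_eq : ∀ x x' y, 2 ≤ x → x ≤ m → 2 ≤ x' → x' ≤ m → 1 ≤ y → y ≤ m → ∀ b,
    ∑ a : ZMod d, κ x y a b = ∑ a : ZMod d, κ x' y a b

namespace IsNoSignaling

variable {d m : ℕ} [NeZero d] {κ : ℕ → ℕ → ZMod d → ZMod d → ℝ} {x y : ℕ}

lemma sum_eq_margA (hκ : IsNoSignaling d m κ) (hx : 2 ≤ x) (hxm : x ≤ m) (hy : 1 ≤ y)
    (hym : y ≤ m) (a : ZMod d) : ∑ b, κ x y a b = margA d κ x a :=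
  hκ.sum_right_eq x y 1 hx hxm hy hym le_rfl (by omega) a

lemma sum_eq_margB (hκ : IsNoSignaling d m κ) (hx : 2 ≤ x) (hxm : x ≤ m) (hy : 1 ≤ y)
    (hym : y ≤ m) (b : ZMod d) : ∑ a, κ x y a b = margB d κ y b :=
  hκ.sum_left_eq x 2 y hx hxm le_rfl (by omega) hy hym b

lemma eq_zero_of_margA_eq_zero (hκ : IsNoSignaling d m κ) (hx : 2 ≤ x) (hxm : x ≤ m)
    (hy : 1 ≤ y) (hym : y ≤ m) {a : ZMod d} (h : margA d κ x a = 0) (b : ZMod d) :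
    κ x y a b = 0 :=
  (sum_eq_zero_iff_of_nonneg fun b _ => hκ.nonneg x y hx hxm hy hym a b).mp
    (by rw [hκ.sum_eq_margA hx hxm hy hym, h]) b (mem_univ b)

lemma eq_zero_of_margB_eq_zero (hκ : IsNoSignaling d m κ) (hx : 2 ≤ x) (hxm : x ≤ m)
    (hy : 1 ≤ y) (hym : y ≤ m) {b : ZMod d} (h : margB d κ y b = 0) (a : ZMod d) :
    κ x y a b = 0 :=
  (sum_eq_zero_iff_of_nonneg fun a _ => hκ.nonneg x y hx hxm hy hym a b).mp
    (by rw [hκ.sum_eq_margB hx hxm hy hym, h]) a (mem_univ a)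

end IsNoSignaling

noncomputable def gFactor (d : ℕ) [NeZero d] (κ : ℕ → ℕ → ZMod d → ZMod d → ℝ) (k : ℕ) (u v t : ZMod d) :
    ℝ :=
  if margB d κ (k - 1) (t + u) = 0 ∨ margA d κ k t = 0 then 0
  else κ k (k - 1) t (t + u) * κ k k t (t - v) / (margB d κ (k - 1) (t + u) * margA d κ k t)

section GFactor

variable {d m : ℕ} [NeZero d] {κ : ℕ → ℕ → ZMod d → ZMod d → ℝ} {k : ℕ}

lemma gFun_eq_gFactor (l : Fin (2 * m - 2) → ZMod d) (k : ℕ) (t : ZMod d) :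
    gFun d m κ l k t = gFactor d κ k (qOf d m l (2 * k - 2)) (qOf d m l (2 * k - 1)) t :=
  rfl

lemma gFactor_eq_zero_of_margB_eq_zero (hκ : IsNoSignaling d m κ) (hk : 2 ≤ k) (hkm : k ≤ m)
    {u v t : ZMod d} (h : margB d κ k (t - v) = 0) : gFactor d κ k u v t = 0 := by
  unfold gFactor
  split_ifs
  · rfl
  · rw [hκ.eq_zero_of_margB_eq_zero hk hkm (by omega) hkm h, mul_zero, zero_div]

lemma sum_gFactor (hκ : IsNoSignaling d m κ) (hk : 2 ≤ k) (hkm : k ≤ m) (u t : ZMod d)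
    (hB : margB d κ (k - 1) (t + u) ≠ 0) :
    ∑ v, gFactor d κ k u v t = κ k (k - 1) t (t + u) / margB d κ (k - 1) (t + u) := by
  by_cases hA : margA d κ k t = 0
  · simp [gFactor, hA, hκ.eq_zero_of_margA_eq_zero (y := k - 1) hk hkm (by omega) (by omega) hA]
  · have hsum : ∑ v, κ k k t (t - v) = margA d κ k t :=
      ((Equiv.subLeft t).sum_comp (κ k k t)).trans (hκ.sum_eq_margA hk hkm (by omega) hkm t)
    simp only [gFactor, hB, hA, or_self, if_false]
    rw [← sum_div, ← mul_sum, hsum]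
    field_simp

lemma sum_sum_gFactor (hκ : IsNoSignaling d m κ) (hk : 2 ≤ k) (hkm : k ≤ m) {s : ZMod d}
    (hB : margB d κ (k - 1) s ≠ 0) : ∑ a, ∑ b, gFactor d κ k a b (s - a) = 1 :=
  calc ∑ a, ∑ b, gFactor d κ k a b (s - a)
      = ∑ a, κ k (k - 1) (s - a) s / margB d κ (k - 1) s :=
        sum_congr rfl fun a _ => by
          rw [sum_gFactor hκ hk hkm _ _ (by rwa [sub_add_cancel]), sub_add_cancel]
    _ = margB d κ (k - 1) s / margB d κ (k - 1) s := by
        have hsum : ∑ a, κ k (k - 1) (s - a) s = margB d κ (k - 1) s :=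
          ((Equiv.subLeft s).sum_comp fun a => κ k (k - 1) a s).trans
            (hκ.sum_eq_margB hk hkm (by omega) (by omega) s)
        rw [← sum_div, hsum]
    _ = 1 := div_self hB

end GFactor

section Congr

variable {d m : ℕ} {l l' : Fin (2 * m - 2) → ZMod d} {p : ℕ}

lemma qOf_congr (h : ∀ j : Fin (2 * m - 2), (j : ℕ) < p → l' j = l j) {n : ℕ}
    (hn : n - 2 < p) : qOf d m l' n = qOf d m l n := by
  unfold qOf
  split_ifs
  · exact h _ hn
  · rfl

lemma cOf_congr (h : ∀ j : Fin (2 * m - 2), (j : ℕ) < p → l' j = l j) {k : ℕ}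
    (hk : 2 * k - 4 < p) : cOf d m l' k = cOf d m l k :=
  sum_congr rfl fun n hn => qOf_congr h (by rw [mem_Icc] at hn; omega)

variable [NeZero d] {κ : ℕ → ℕ → ZMod d → ZMod d → ℝ}

lemma gFun_congr (h : ∀ j : Fin (2 * m - 2), (j : ℕ) < p → l' j = l j) {k : ℕ}
    (hk : 2 * k - 3 < p) (t : ZMod d) : gFun d m κ l' k t = gFun d m κ l k t := by
  rw [gFun_eq_gFactor, gFun_eq_gFactor, qOf_congr h (by omega), qOf_congr h (by omega)]

lemma FFun_congr (h : ∀ j : Fin (2 * m - 2), (j : ℕ) < p → l' j = l j) {i : ℕ}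
    (hi : 2 * i - 3 < p) (t : ZMod d) : FFun d m κ l' i t = FFun d m κ l i t := by
  unfold FFun
  rw [qOf_congr h (by omega)]
  refine congrArg _ (prod_congr rfl fun k hk => ?_)
  rw [mem_Icc] at hk
  rw [cOf_congr h (by omega), gFun_congr h (by omega)]

end Congr

section Recursion

variable {d m : ℕ} {l : Fin (2 * m - 2) → ZMod d}

lemma qOf_update_self {j : Fin (2 * m - 2)} {n : ℕ} (hn : n - 2 = j) (a : ZMod d) :
    qOf d m (update l j a) n = a := by
  rw [qOf, dif_pos (hn ▸ j.isLt), show (⟨n - 2, hn ▸ j.isLt⟩ : Fin (2 * m - 2)) = j from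
    Fin.ext hn, update_self]

lemma qOf_update_of_ne {j : Fin (2 * m - 2)} {n : ℕ} (hn : n - 2 ≠ j) (a : ZMod d) :
    qOf d m (update l j a) n = qOf d m l n := by
  unfold qOf
  split_ifs
  · exact update_of_ne (Fin.ne_of_val_ne hn) _ _
  · rfl

lemma cOf_succ (l : Fin (2 * m - 2) → ZMod d) {k : ℕ} (hk : 2 ≤ k) :
    cOf d m l (k + 1) = cOf d m l k + qOf d m l (2 * k - 1) + qOf d m l (2 * k) := by
  unfold cOf
  rw [show 2 * (k + 1) - 2 = 2 * k - 2 + 1 + 1 by omega, sum_Icc_succ_top (by omega),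
    sum_Icc_succ_top (by omega), show 2 * k - 2 + 1 = 2 * k - 1 by omega,
    show 2 * k - 1 + 1 = 2 * k by omega]

variable [NeZero d] {κ : ℕ → ℕ → ZMod d → ZMod d → ℝ}

lemma FFun_succ (l : Fin (2 * m - 2) → ZMod d) {i : ℕ} (hi : 1 ≤ i) (t : ZMod d) :
    FFun d m κ l (i + 1) t = FFun d m κ l i t * gFun d m κ l (i + 1) (t - cOf d m l (i + 1)) := by
  rw [FFun, prod_Icc_succ_top (by omega), FFun, mul_assoc]

lemma FFun_succ_update {i : ℕ} (hi : 2 ≤ i) {j₁ j₂ : Fin (2 * m - 2)} (hj₁ : (j₁ : ℕ) = 2 * i - 2)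
    (hj₂ : (j₂ : ℕ) = 2 * i - 1) (a b t : ZMod d) :
    FFun d m κ (update (update l j₁ a) j₂ b) (i + 1) t =
      FFun d m κ l i t * gFactor d κ (i + 1) a b (t - cOf d m l i - qOf d m l (2 * i - 1) - a) := by
  have hbelow : ∀ j : Fin (2 * m - 2), (j : ℕ) < 2 * i - 2 →
      update (update l j₁ a) j₂ b j = l j := fun j hj => by
    rw [update_of_ne (Fin.ne_of_val_ne (by omega)), update_of_ne (Fin.ne_of_val_ne (by omega))]
  set l' := update (update l j₁ a) j₂ b
  have hq₁ : qOf d m l' (2 * i) = a := by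
    rw [qOf_update_of_ne (by omega), qOf_update_self (by omega)]
  have hq₂ : qOf d m l' (2 * i + 1) = b := qOf_update_self (by omega) b
  rw [FFun_succ l' (by omega), FFun_congr hbelow (by omega), gFun_eq_gFactor,
    show 2 * (i + 1) - 2 = 2 * i by omega, show 2 * (i + 1) - 1 = 2 * i + 1 by omega, hq₁, hq₂,
    cOf_succ l' hi, cOf_congr hbelow (by omega), qOf_congr hbelow (by omega), hq₁,
    sub_add_eq_sub_sub, sub_add_eq_sub_sub]

lemma FFun_eq_zero_of_margB_eq_zero (hκ : IsNoSignaling d m κ) {k : ℕ} (hk : 2 ≤ k)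
    (hkm : k ≤ m) {t : ZMod d} (h : margB d κ k (t - cOf d m l k - qOf d m l (2 * k - 1)) = 0) :
    FFun d m κ l k t = 0 :=
  mul_eq_zero_of_right _ <| prod_eq_zero (mem_Icc.mpr ⟨hk, le_rfl⟩) <|
    gFactor_eq_zero_of_margB_eq_zero hκ hk hkm h

end Recursion

theorem sum_FFun_agreeingBelow {d m : ℕ} [NeZero d] {κ : ℕ → ℕ → ZMod d → ZMod d → ℝ}
    (hκ : IsNoSignaling d m κ) (l : Fin (2 * m - 2) → ZMod d) (t : ZMod d) {i : ℕ}
    (hi : 2 ≤ i) (him : i ≤ m) :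
    ∑ l' ∈ agreeingBelow l (2 * i - 2), FFun d m κ l' m t = FFun d m κ l i t := by
  induction him using Nat.decreasingInduction generalizing l with
  | self => rw [agreeingBelow_of_le l le_rfl, sum_singleton]
  | of_succ k hkm ih =>
    have h₁ : 2 * k - 2 < 2 * m - 2 := by omega
    have h₂ : 2 * k - 2 + 1 < 2 * m - 2 := by omega
    set s := t - cOf d m l k - qOf d m l (2 * k - 1)
    calc ∑ l' ∈ agreeingBelow l (2 * k - 2), FFun d m κ l' m t
        = ∑ a, ∑ b, ∑ l' ∈ agreeingBelow (update (update l ⟨_, h₁⟩ a) ⟨_, h₂⟩ b)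
            (2 * (k + 1) - 2), FFun d m κ l' m t := by
          simp_rw [sum_agreeingBelow_succ _ _ h₁, sum_agreeingBelow_succ _ _ h₂,
            show 2 * k - 2 + 1 + 1 = 2 * (k + 1) - 2 by omega]
      _ = ∑ a, ∑ b, FFun d m κ l k t * gFactor d κ (k + 1) a b (s - a) := by
          refine sum_congr rfl fun a _ => sum_congr rfl fun b _ => ?_
          rw [ih _ (by omega), FFun_succ_update hi rfl (by dsimp only; omega)]
      _ = FFun d m κ l k t * ∑ a, ∑ b, gFactor d κ (k + 1) a b (s - a) := by
          simp_rw [mul_sum]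
      _ = FFun d m κ l k t := by
          by_cases hB : margB d κ k s = 0
          · rw [FFun_eq_zero_of_margB_eq_zero hκ hi hkm.le hB, zero_mul]
          · rw [sum_sum_gFactor hκ (by omega) hkm (by simpa using hB), mul_one]

/-- The sum over `q_{2i}, ..., q_{2m-1}` is the sum over the tuples `l'` that agree with `l`
on the coordinates `q_2, ..., q_{2i-1}`. -/
theorem FFun_telescoping_general
    (d m : ℕ) [NeZero d]
    (κ : ℕ → ℕ → ZMod d → ZMod d → ℝ)
    (hpos : ∀ x y, 2 ≤ x → x ≤ m → 1 ≤ y → y ≤ m → ∀ a b, 0 ≤ κ x y a b)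
    (hnsA : ∀ x y y', 2 ≤ x → x ≤ m → 1 ≤ y → y ≤ m → 1 ≤ y' → y' ≤ m → ∀ a,
      ∑ b : ZMod d, κ x y a b = ∑ b : ZMod d, κ x y' a b)
    (hnsB : ∀ x x' y, 2 ≤ x → x ≤ m → 2 ≤ x' → x' ≤ m → 1 ≤ y → y ≤ m → ∀ b,
      ∑ a : ZMod d, κ x y a b = ∑ a : ZMod d, κ x' y a b) :
    ∀ (l : Fin (2 * m - 2) → ZMod d) (t : ZMod d) (i : ℕ), 2 ≤ i → i ≤ m →
      ∑ l' ∈ Finset.univ.filter (fun l' : Fin (2 * m - 2) → ZMod d =>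
          ∀ j : Fin (2 * m - 2), (j : ℕ) + 2 < 2 * i → l' j = l j),
        FFun d m κ l' m t = FFun d m κ l i t := by
  intro l t i hi him
  rw [← sum_FFun_agreeingBelow ⟨hpos, hnsA, hnsB⟩ l t hi him]
  exact sum_congr (filter_congr fun l' _ => forall_congr' fun j => imp_congr_left (by omega))
    fun _ _ => rfl

/-- the telescoping identity
`Σ_{q_{2i},...,q_{2m-1}} 𝓕^m_l(t) = 𝓕^i_l(t)` for all `t`, `l`, `2 ≤ i ≤ m`.
The sum over `q_{2i},...,q_{2m-1}` is expressed as a sum over tuples `l'` agreeing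
with `l` on the coordinates `q_2, ..., q_{2i-1}`. -/
theorem FFun_telescoping
    (d m : ℕ) [NeZero d] (hd : 2 ≤ d) (hm : 2 ≤ m)
    (κ : ℕ → ℕ → ZMod d → ZMod d → ℝ)
    (hpos : ∀ x y, 2 ≤ x → x ≤ m → 1 ≤ y → y ≤ m → ∀ a b, 0 ≤ κ x y a b)
    (hnorm : ∀ x y, 2 ≤ x → x ≤ m → 1 ≤ y → y ≤ m →
      ∑ a : ZMod d, ∑ b : ZMod d, κ x y a b = 1)
    (hnsA : ∀ x y y', 2 ≤ x → x ≤ m → 1 ≤ y → y ≤ m → 1 ≤ y' → y' ≤ m → ∀ a,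
      ∑ b : ZMod d, κ x y a b = ∑ b : ZMod d, κ x y' a b)
    (hnsB : ∀ x x' y, 2 ≤ x → x ≤ m → 2 ≤ x' → x' ≤ m → 1 ≤ y → y ≤ m → ∀ b,
      ∑ a : ZMod d, κ x y a b = ∑ a : ZMod d, κ x' y a b) :
    ∀ (l : Fin (2 * m - 2) → ZMod d) (t : ZMod d) (i : ℕ), 2 ≤ i → i ≤ m →
      ∑ l' ∈ Finset.univ.filter (fun l' : Fin (2 * m - 2) → ZMod d =>
          ∀ j : Fin (2 * m - 2), (j : ℕ) + 2 < 2 * i → l' j = l j),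
        FFun d m κ l' m t = FFun d m κ l i t :=
  FFun_telescoping_general d m κ hpos hnsA hnsB
end

section
/- Suppose an assemblage {σ^obs_{a|x}}_{x ∈ {1,...,m}} admits a decomposition {ξ^γ_{a|x}} indexed by strings γ: {1,...,m} → ℤ_d, with ξ^γ_{a|x} ⪰ 0, Σ_γ ξ^γ_{a|x} = σ^obs_{a|x}, Σ_a ξ^γ_{a|x} independent of x for each γ, and Σ_γ Tr(ξ^γ_{a=γ(x)|x}) = 1 for every x ∈ {1,...,m} (Eve guesses all m inputs perfectly). Then the assemblage is unsteerable: setting ζ^γ := ξ^γ_{a=γ(x)|x} (which is independent of x), we have ζ^γ ⪰ 0, Σ_γ Tr(ζ^γ) = 1, and σ^obs_{a|x} = Σ_γ δ_{a,γ(x)} ζ^γ, i.e. {σ^obs_{a|x}} admits a local-hidden-state model with hidden states {ζ^γ}. -/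
open scoped BigOperators ComplexOrder

/-!
Perfect guessing means the weights `Σ_γ Tr ξ^γ_{γ(x)|x}` already exhaust the total trace
`Σ_{γ,a} Tr ξ^γ_{a|x} = 1`; since the traces of positive semidefinite operators are nonnegative,
every off-guess component `ξ^γ_{a|x}`, `a ≠ γ(x)`, has zero trace and hence vanishes. The
no-signalling marginal `Σ_a ξ^γ_{a|x}` is then just `ξ^γ_{γ(x)|x}`, which is therefore independent
of `x` and serves as the hidden state `ζ^γ`.
-/

namespace Finset

variable {ι κ M : Type*} [Fintype ι] [Fintype κ] [AddCommMonoid M] [PartialOrder M]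
  [IsOrderedCancelAddMonoid M]

theorem eq_zero_of_sum_eq_apply_of_nonneg {f : κ → M} (hf : ∀ k, 0 ≤ f k) {k₀ k : κ}
    (h : ∑ k, f k = f k₀) (hk : k ≠ k₀) : f k = 0 := by
  classical
  rw [← add_sum_erase _ _ (mem_univ k₀), add_eq_left] at h
  exact (sum_eq_zero_iff_of_nonneg fun k _ => hf k).1 h k (mem_erase.2 ⟨hk, mem_univ k⟩)

theorem eq_zero_of_sum_sum_eq_sum_apply_of_nonneg {f : ι → κ → M} (hf : ∀ i k, 0 ≤ f i k)
    (g : ι → κ) (h : ∑ i, ∑ k, f i k = ∑ i, f i (g i)) {i : ι} {k : κ} (hk : k ≠ g i) :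
    f i k = 0 := by
  have hdiag : ∀ i, ∑ k, f i k = f i (g i) := fun i =>
    ((sum_eq_sum_iff_of_le fun i _ => single_le_sum (fun k _ => hf i k) (mem_univ (g i))).1
      h.symm i (mem_univ i)).symm
  exact eq_zero_of_sum_eq_apply_of_nonneg (hf i) (hdiag i) hk

end Finset

theorem Matrix.PosSemidef.eq_zero_of_sum_sum_trace_eq_sum_trace {ι κ n 𝕜 : Type*} [Fintype ι]
    [Fintype κ] [Fintype n] [RCLike 𝕜] {A : ι → κ → Matrix n n 𝕜}
    (hA : ∀ i k, (A i k).PosSemidef) (g : ι → κ)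
    (h : ∑ i, ∑ k, (A i k).trace = ∑ i, (A i (g i)).trace) {i : ι} {k : κ} (hk : k ≠ g i) :
    A i k = 0 :=
  (hA i k).trace_eq_zero_iff.1 <|
    Finset.eq_zero_of_sum_sum_eq_sum_apply_of_nonneg (fun i k => (hA i k).trace_nonneg) g h hk

/-- if Eve's decomposition `{ξ^γ_{a|x}}` (indexed by strings
`γ : {1,...,m} → ℤ_d`) of an assemblage guesses all `m` inputs perfectly, then the
assemblage is unsteerable: the operators `ζ^γ := ξ^γ_{γ(x)|x}` are independent of `x`,
positive semidefinite, have total trace 1, and provide a local-hidden-state model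
`σ^obs_{a|x} = Σ_γ δ_{a,γ(x)} ζ^γ`. -/
theorem all_input_perfect_guess_implies_unsteerable
    (d m n : ℕ) [NeZero d] [NeZero m]
    (σ : ZMod d → Fin m → Matrix (Fin n) (Fin n) ℂ)
    (hσtr : ∀ x, (∑ a : ZMod d, σ a x).trace = 1)
    (ξ : (Fin m → ZMod d) → ZMod d → Fin m → Matrix (Fin n) (Fin n) ℂ)
    (hpsd : ∀ γ a x, (ξ γ a x).PosSemidef)
    (hdec : ∀ a x, ∑ γ : Fin m → ZMod d, ξ γ a x = σ a x)
    (hns : ∀ γ x x', ∑ a : ZMod d, ξ γ a x = ∑ a : ZMod d, ξ γ a x')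
    (hguess : ∀ x : Fin m, ∑ γ : Fin m → ZMod d, (ξ γ (γ x) x).trace = 1) :
    ∃ ζ : (Fin m → ZMod d) → Matrix (Fin n) (Fin n) ℂ,
      (∀ γ, (ζ γ).PosSemidef) ∧
      (∑ γ : Fin m → ZMod d, (ζ γ).trace = 1) ∧
      (∀ γ x, ζ γ = ξ γ (γ x) x) ∧
      (∀ a x, σ a x = ∑ γ : Fin m → ZMod d, if a = γ x then ζ γ else 0) := by
  have htotal : ∀ x, ∑ γ, ∑ a, (ξ γ a x).trace = 1 := fun x => by
    simp_rw [← Matrix.trace_sum]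
    rw [Finset.sum_comm]
    simp only [hdec, hσtr]
  have hoff : ∀ γ a x, a ≠ γ x → ξ γ a x = 0 := fun γ a x hax =>
    Matrix.PosSemidef.eq_zero_of_sum_sum_trace_eq_sum_trace (fun γ a => hpsd γ a x) (· x)
      ((htotal x).trans (hguess x).symm) hax
  have hmarg : ∀ γ x, ∑ a, ξ γ a x = ξ γ (γ x) x := fun γ x =>
    Fintype.sum_eq_single _ fun a ha => hoff γ a x ha
  obtain ⟨x₀⟩ : Nonempty (Fin m) := inferInstance
  have hconst : ∀ γ x, ξ γ (γ x₀) x₀ = ξ γ (γ x) x := fun γ x => by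
    rw [← hmarg, hns γ x₀ x, hmarg]
  refine ⟨fun γ => ξ γ (γ x₀) x₀, fun γ => hpsd _ _ _, hguess x₀, hconst, fun a x => ?_⟩
  rw [← hdec a x]
  refine Fintype.sum_congr _ _ fun γ => ?_
  split_ifs with h
  · exact h ▸ (hconst γ x).symm
  · exact hoff γ a x h
end
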